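/- arXiv:chao-dyn/9703010 — 9 statements merged into one kernel-verified Lean document; each statement's English description precedes it below -/
import Mathlib

section
/- The parameter-dependent semiflow possesses τ₁-slow relaxations if and only if there exist points x* ∈ X and k* ∈ K, sequences xᵢ → x* in X and kᵢ → k* in K, and a number δ > 0 such that for every i, every y ∈ ω(x*, k*) and every z ∈ ω(xᵢ, kᵢ) satisfy dist(y, z) > δ. -/
/-!
If `τ₁` is unbounded, choose `(xₙ, kₙ)` with `τ₁(xₙ, kₙ, ε) → ∞` converging to some `(x*, k*)`.
Since `ω(x*, k*)` is compact, the orbit of `x*` comes `ε/2`-close to each of its points before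
a fixed time `T`; on `[0, T]` the orbits of `xₙ` follow that of `x*` uniformly, yet stay `ε`-far
from `ω(xₙ, kₙ)`, so the two ω-limit sets are `ε/4` apart.

Conversely, after some time `T₀` the orbit of `x*` stays `δ/4`-close to `ω(x*, k*)`, and for
large `i` the orbit of `xᵢ` follows it within `δ/4` up to time `T₀ + T`, hence is `δ/2`-far from
`ω(xᵢ, kᵢ)` on `[T₀, T₀ + T]`. The motion started at `f(T₀, xᵢ, kᵢ)`, which has the same
ω-limit set, therefore has `τ₁ ≥ T`.
-/

open Filter Topology Metric Set MeasureTheory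
open scoped ENNReal

/-- A parameter-dependent semiflow on a metric space `X` with parameter space `K`:
a map `f : [0,∞) × X × K → X` (encoded with time in `ℝ`, with conditions only for
nonnegative times), continuous on `[0,∞) × X × K`, satisfying the semigroup
identities, and injective in `x` for each fixed time and parameter. -/
structure PSemiflow (X K : Type*) [MetricSpace X] [MetricSpace K] where
  f : ℝ → X → K → X
  cont : ContinuousOn (fun p : ℝ × X × K => f p.1 p.2.1 p.2.2) {p : ℝ × X × K | 0 ≤ p.1}
  map_zero : ∀ x k, f 0 x k = x
  semigroup : ∀ t t' : ℝ, 0 ≤ t → 0 ≤ t' → ∀ x k, f t (f t' x k) k = f (t + t') x k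
  inj : ∀ t : ℝ, 0 ≤ t → ∀ k, Function.Injective fun x => f t x k

namespace PSemiflow

variable {X K : Type*} [MetricSpace X] [MetricSpace K] (S : PSemiflow X K)

/-- The ω-limit set `ω(x,k)`: all limits of `f(tₙ,x,k)` along sequences `tₙ → ∞`. -/
def omega (x : X) (k : K) : Set X :=
  {y | ∃ t : ℕ → ℝ, (∀ n, 0 ≤ t n) ∧ Tendsto t atTop atTop ∧
      Tendsto (fun n => S.f (t n) x k) atTop (𝓝 y)}

/-- The complete ω-limit set `ω(k) = ⋃ₓ ω(x,k)`. -/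
def omegaK (k : K) : Set X := ⋃ x : X, S.omega x k

/-- The relaxation time `τ₁(x,k,ε)`: time of the first entry of the motion into the
`ε`-neighbourhood of `ω(x,k)`. -/
noncomputable def tau1 (x : X) (k : K) (ε : ℝ) : ℝ :=
  sInf {t : ℝ | 0 ≤ t ∧ infDist (S.f t x k) (S.omega x k) < ε}

/-- The system possesses τ₁-slow relaxations. -/
def SlowTau1 : Prop := ∃ ε > (0:ℝ), ∀ T > (0:ℝ), ∃ x k, S.tau1 x k ε > T

end PSemiflow

namespace PSemiflow

variable {X K : Type*} [MetricSpace X] [MetricSpace K] (S : PSemiflow X K)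

theorem mem_omega_iff_mapClusterPt {x : X} {k : K} {y : X} :
    y ∈ S.omega x k ↔ MapClusterPt y atTop fun t => S.f t x k := by
  constructor
  · rintro ⟨t, -, ht, hy⟩
    exact hy.mapClusterPt.of_comp ht
  · intro h
    obtain ⟨t, hy, ht⟩ := h.exists_seq_tendsto
    refine ⟨fun n => max (t n) 0, fun n => le_max_right _ _,
      tendsto_atTop_mono (fun n => le_max_left _ _) ht, hy.congr' ?_⟩
    filter_upwards [ht.eventually_ge_atTop 0] with n hn
    simp only [Function.comp_apply, max_eq_left hn]

theorem omega_eq_omegaLimit (x : X) (k : K) :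
    S.omega x k = omegaLimit atTop (fun t x => S.f t x k) {x} := by
  ext y
  rw [mem_omega_iff_mapClusterPt, mem_omegaLimit_singleton_iff_mapClusterPt]

theorem isClosed_omega (x : X) (k : K) : IsClosed (S.omega x k) :=
  S.omega_eq_omegaLimit x k ▸ isClosed_omegaLimit _ _ _

theorem omega_nonempty [CompactSpace X] (x : X) (k : K) : (S.omega x k).Nonempty :=
  S.omega_eq_omegaLimit x k ▸ nonempty_omegaLimit _ _ _ (singleton_nonempty x)

theorem omega_f (x : X) (k : K) {s : ℝ} (hs : 0 ≤ s) :
    S.omega (S.f s x k) k = S.omega x k := by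
  ext y
  have hshift : (fun t => S.f t (S.f s x k) k) =ᶠ[atTop] (fun t => S.f t x k) ∘ (· + s) := by
    filter_upwards [eventually_ge_atTop 0] with t ht
    exact S.semigroup t s ht hs x k
  rw [mem_omega_iff_mapClusterPt, mem_omega_iff_mapClusterPt, hshift.mapClusterPt_iff,
    mapClusterPt_comp, map_add_atTop_eq]

theorem eventually_infDist_omega_lt [CompactSpace X] (x : X) (k : K) {ε : ℝ} (hε : 0 < ε) :
    ∀ᶠ t in atTop, infDist (S.f t x k) (S.omega x k) < ε := by
  have hsub : omegaLimit atTop (fun t x => S.f t x k) {x} ⊆ thickening ε (S.omega x k) := by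
    rw [← S.omega_eq_omegaLimit]
    exact self_subset_thickening hε _
  filter_upwards [eventually_mapsTo_of_isOpen_of_omegaLimit_subset _ _ _ isOpen_thickening hsub]
    with t ht
  exact (mem_thickening_iff_infDist_lt (S.omega_nonempty x k)).1 (ht rfl)

/-- The ω-limit set is compact, so the open sets swept by `ε`-balls around the orbit up to time
`T` cover it for a single `T`. -/
theorem exists_forall_omega_exists_Icc_dist_lt [CompactSpace X] (x : X) (k : K) {ε : ℝ}
    (hε : 0 < ε) : ∃ T, ∀ y ∈ S.omega x k, ∃ t ∈ Icc 0 T, dist y (S.f t x k) < ε := by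
  have hcover : S.omega x k ⊆ ⋃ T : ℝ, ⋃ t ∈ Icc 0 T, ball (S.f t x k) ε := by
    rintro y ⟨t, ht0, -, hy⟩
    obtain ⟨n, hn⟩ := (hy.eventually (ball_mem_nhds y hε)).exists
    exact mem_iUnion.2 ⟨t n, mem_biUnion ⟨ht0 n, le_rfl⟩ (mem_ball_comm.1 hn)⟩
  have hmono : Monotone fun T : ℝ => ⋃ t ∈ Icc 0 T, ball (S.f t x k) ε :=
    fun _ _ hT => biUnion_mono (Icc_subset_Icc_right hT) fun _ _ => le_rfl
  obtain ⟨T, hT⟩ := (S.isClosed_omega x k).isCompact.elim_directed_cover _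
    (fun _ => isOpen_biUnion fun _ _ => isOpen_ball) hcover hmono.directed_le
  refine ⟨T, fun y hy => ?_⟩
  simpa only [mem_iUnion₂, mem_ball, exists_prop] using hT hy

theorem tendstoUniformlyOn_Icc {ι : Type*} {l : Filter ι} {x : X} {k : K} {xs : ι → X}
    {ks : ι → K} (hx : Tendsto xs l (𝓝 x)) (hk : Tendsto ks l (𝓝 k)) (R : ℝ) :
    TendstoUniformlyOn (fun i t => S.f t (xs i) (ks i)) (fun t => S.f t x k) l (Icc 0 R) := by
  have hcont : ContinuousOn (Function.uncurry fun (p : X × K) (t : ℝ) => S.f t p.1 p.2)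
      (univ ×ˢ Icc 0 R) :=
    S.cont.comp (f := fun q : (X × K) × ℝ => (q.2, q.1.1, q.1.2)) (by fun_prop) fun q hq => hq.2.1
  intro u hu
  obtain ⟨v, hv, hvu⟩ :=
    isCompact_Icc.mem_uniformity_of_prod hcont (mem_univ (x, k)) (tendsto_swap_uniformity hu)
  rw [nhdsWithin_univ] at hv
  filter_upwards [hx.prodMk_nhds hk hv] with i hi t ht
  exact hvu _ hi t ht

theorem le_infDist_omega_of_lt_tau1 {x : X} {k : K} {ε t : ℝ} (ht : 0 ≤ t)
    (htτ : t < S.tau1 x k ε) : ε ≤ infDist (S.f t x k) (S.omega x k) := by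
  by_contra! h
  exact htτ.not_ge (csInf_le ⟨0, fun _ hu => hu.1⟩ ⟨ht, h⟩)

theorem le_tau1_of_forall_le_infDist [CompactSpace X] {x : X} {k : K} {ε R : ℝ} (hε : 0 < ε)
    (h : ∀ t ∈ Ico 0 R, ε ≤ infDist (S.f t x k) (S.omega x k)) : R ≤ S.tau1 x k ε := by
  -- the entry-time set must be shown nonempty, as `sInf ∅ = 0`
  obtain ⟨t, ht, ht0⟩ :=
    ((S.eventually_infDist_omega_lt x k hε).and (eventually_ge_atTop 0)).exists
  refine le_csInf ⟨t, ht0, ht⟩ fun t ⟨ht0, ht⟩ => ?_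
  by_contra! htR
  exact ht.not_ge (h t ⟨ht0, htR⟩)

theorem exists_tendsto_tau1_atTop [CompactSpace X] [CompactSpace K] {ε : ℝ}
    (h : ∀ T > (0 : ℝ), ∃ x k, S.tau1 x k ε > T) :
    ∃ (x : X) (k : K) (xs : ℕ → X) (ks : ℕ → K), Tendsto xs atTop (𝓝 x) ∧
      Tendsto ks atTop (𝓝 k) ∧ Tendsto (fun n => S.tau1 (xs n) (ks n) ε) atTop atTop := by
  choose xs ks hτ using fun n : ℕ => h (n + 1) n.cast_add_one_pos
  obtain ⟨⟨x, k⟩, φ, hφ, hlim⟩ := CompactSpace.tendsto_subseq fun n => (xs n, ks n)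
  refine ⟨x, k, xs ∘ φ, ks ∘ φ, hlim.fst_nhds, hlim.snd_nhds, ?_⟩
  refine tendsto_atTop_mono (fun n => ?_)
    (tendsto_natCast_atTop_atTop.comp hφ.tendsto_atTop)
  simp only [Function.comp_apply]
  linarith [hτ (φ n)]

theorem eventually_omega_separated_of_tendsto_tau1 [CompactSpace X] {x : X} {k : K}
    {xs : ℕ → X} {ks : ℕ → K} {ε : ℝ} (hx : Tendsto xs atTop (𝓝 x)) (hk : Tendsto ks atTop (𝓝 k))
    (hε : 0 < ε) (hτ : Tendsto (fun n => S.tau1 (xs n) (ks n) ε) atTop atTop) :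
    ∀ᶠ n in atTop, ∀ y ∈ S.omega x k, ∀ z ∈ S.omega (xs n) (ks n), dist y z > ε / 4 := by
  obtain ⟨T, hT⟩ := S.exists_forall_omega_exists_Icc_dist_lt x k (half_pos hε)
  filter_upwards [hτ.eventually_gt_atTop T,
    Metric.tendstoUniformlyOn_iff.1 (S.tendstoUniformlyOn_Icc hx hk T) (ε / 4) (by positivity)]
    with n hτn hclose y hy z hz
  obtain ⟨t, ht, hyt⟩ := hT y hy
  have hfar : ε ≤ dist (S.f t (xs n) (ks n)) z :=
    (S.le_infDist_omega_of_lt_tau1 ht.1 (ht.2.trans_lt hτn)).trans (infDist_le_dist_of_mem hz)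
  have hxt := hclose t ht
  rw [dist_comm] at hyt hxt
  linarith [dist_triangle4 (S.f t (xs n) (ks n)) (S.f t x k) y z]

theorem exists_gt_tau1_of_omega_separated [CompactSpace X] {x : X} {k : K} {xs : ℕ → X}
    {ks : ℕ → K} {δ : ℝ} (hx : Tendsto xs atTop (𝓝 x)) (hk : Tendsto ks atTop (𝓝 k))
    (hδ : 0 < δ) (hsep : ∀ i, ∀ y ∈ S.omega x k, ∀ z ∈ S.omega (xs i) (ks i), dist y z > δ)
    (T : ℝ) : ∃ x' k', S.tau1 x' k' (δ / 2) > T := by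
  obtain ⟨T₀, hT₀⟩ := eventually_atTop.1
    ((S.eventually_infDist_omega_lt x k (by positivity : 0 < δ / 4)).and (eventually_ge_atTop 0))
  have hT₀0 : 0 ≤ T₀ := (hT₀ T₀ le_rfl).2
  obtain ⟨i, hi⟩ := (Metric.tendstoUniformlyOn_iff.1
    (S.tendstoUniformlyOn_Icc hx hk (T₀ + (T + 1))) (δ / 4) (by positivity)).exists
  refine ⟨S.f T₀ (xs i) (ks i), ks i, lt_of_lt_of_le (lt_add_one T)
    (S.le_tau1_of_forall_le_infDist (half_pos hδ) fun t ⟨ht0, htT⟩ => ?_)⟩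
  rw [S.omega_f _ _ hT₀0, S.semigroup t T₀ ht0 hT₀0, le_infDist (S.omega_nonempty _ _)]
  intro z hz
  obtain ⟨y, hy, hyt⟩ := (infDist_lt_iff (S.omega_nonempty x k)).1 (hT₀ (t + T₀) (by linarith)).1
  have hxt := hi (t + T₀) ⟨by linarith, by linarith⟩
  linarith [hsep i y hy z hz, dist_triangle4 y (S.f (t + T₀) x k) (S.f (t + T₀) (xs i) (ks i)) z,
    dist_comm y (S.f (t + T₀) x k)]

end PSemiflow

/-- Theorem 2.1′: the system possesses τ₁-slow relaxations iff the ω-limit set has a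
jump discontinuity: there are `x* ∈ X`, `k* ∈ K`, sequences `xᵢ → x*`, `kᵢ → k*` and
`δ > 0` such that for every `i`, every `y ∈ ω(x*,k*)` and `z ∈ ω(xᵢ,kᵢ)` satisfy
`dist y z > δ`. -/
theorem slowTau1_iff_omega_jump {X K : Type*} [MetricSpace X] [CompactSpace X]
    [MetricSpace K] [CompactSpace K] (S : PSemiflow X K) :
    S.SlowTau1 ↔
      ∃ (xstar : X) (kstar : K) (xs : ℕ → X) (ks : ℕ → K) (δ : ℝ), 0 < δ ∧
        Tendsto xs atTop (𝓝 xstar) ∧ Tendsto ks atTop (𝓝 kstar) ∧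
        ∀ i, ∀ y ∈ S.omega xstar kstar, ∀ z ∈ S.omega (xs i) (ks i), dist y z > δ := by
  constructor
  · rintro ⟨ε, hε, hslow⟩
    obtain ⟨x, k, xs, ks, hx, hk, hτ⟩ := S.exists_tendsto_tau1_atTop hslow
    obtain ⟨φ, hφ, hsep⟩ :=
      extraction_of_eventually_atTop (S.eventually_omega_separated_of_tendsto_tau1 hx hk hε hτ)
    exact ⟨x, k, xs ∘ φ, ks ∘ φ, ε / 4, by positivity, hx.comp hφ.tendsto_atTop,
      hk.comp hφ.tendsto_atTop, hsep⟩
  · rintro ⟨x, k, xs, ks, δ, hδ, hx, hk, hsep⟩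
    exact ⟨δ / 2, half_pos hδ, fun T _ => S.exists_gt_tau1_of_omega_separated hx hk hδ hsep T⟩
end

section
/- Suppose there exist a point (x*, k*) ∈ X × K, a sequence (xₙ, kₙ) → (x*, k*) in X × K, a point x' ∈ ω(x*, k*), and a number ε > 0 such that dist(x', ω(xₙ, kₙ)) > ε for every n. Then the parameter-dependent semiflow possesses τ₂-slow relaxations. -/
open Filter Topology Metric Set MeasureTheory
open scoped ENNReal

namespace PSemiflow

variable {X K : Type*} [MetricSpace X] [MetricSpace K] (S : PSemiflow X K)

/-- The relaxation time `τ₂(x,k,ε)`: Lebesgue measure of the set of times the motion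
spends outside the `ε`-neighbourhood of `ω(x,k)`. -/
noncomputable def tau2 (x : X) (k : K) (ε : ℝ) : ℝ≥0∞ :=
  volume {t : ℝ | 0 ≤ t ∧ ε ≤ infDist (S.f t x k) (S.omega x k)}

/-- The system possesses τ₂-slow relaxations. -/
def SlowTau2 : Prop := ∃ ε > (0:ℝ), ∀ T > (0:ℝ), ∃ x k, ENNReal.ofReal T < S.tau2 x k ε

end PSemiflow

/-! The flow moves every point by less than any given amount during a short enough time,
uniformly in the point and the parameter. Hence each approach of the trajectory of `(x*, k*)`
to its ω-limit point `x'` is preceded by a time window of fixed length during which it stays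
within `ε/4` of `x'`, so it spends infinite total time there, and more than `T` before some
time `M`. On `[0, M]` the trajectories of `(xₙ, kₙ)` shadow that of `(x*, k*)` within `ε/4` for
large `n`; at those times they are `ε/2`-close to `x'`, hence `ε/2`-far from `ω(xₙ, kₙ)`. -/

theorem volume_eq_top_of_forall_exists_Ioc_subset {A : Set ℝ} {δ : ℝ} (hδ : 0 < δ)
    (h : ∀ b, ∃ s, b ≤ s ∧ Ioc (s - δ) s ⊆ A) : volume A = ∞ := by
  obtain ⟨s, hsA, hs⟩ := exists_seq_of_forall_finset_exists (fun s => Ioc (s - δ) s ⊆ A)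
    (fun a b => a + δ ≤ b) fun F _ => by
      obtain ⟨b, hb⟩ := F.bddAbove
      obtain ⟨s, hbs, hsA⟩ := h (b + δ)
      exact ⟨s, hsA, fun a ha => by linarith [hb ha]⟩
  have hdisj : Pairwise (Function.onFun Disjoint fun n => Ioc (s n - δ) (s n)) := by
    refine pairwise_disjoint_on _ |>.mpr fun m n hmn => ?_
    exact Ioc_disjoint_Ioc_of_le (by linarith [hs m n hmn])
  refine top_unique (le_of_eq_of_le ?_ (measure_mono (iUnion_subset hsA)))
  rw [measure_iUnion hdisj fun _ => measurableSet_Ioc]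
  simp only [Real.volume_Ioc, sub_sub_cancel]
  exact (ENNReal.tsum_const_eq_top_of_ne_zero (ENNReal.ofReal_pos.mpr hδ).ne').symm

theorem exists_lt_measure_Iic_inter {μ : Measure ℝ} {A : Set ℝ} {c : ℝ≥0∞} (hc : c < μ A) :
    ∃ M, c < μ (Iic M ∩ A) := by
  have hlim := tendsto_measure_Iic_atTop (μ.restrict A)
  rw [Measure.restrict_apply_univ] at hlim
  simp only [Measure.restrict_apply measurableSet_Iic] at hlim
  exact (hlim.eventually (lt_mem_nhds hc)).exists

namespace PSemiflow

variable {X K : Type*} [MetricSpace X] [MetricSpace K] (S : PSemiflow X K)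

theorem eventually_forall_Icc_dist_lt (M : ℝ) (x₀ : X) (k₀ : K) {e : ℝ} (he : 0 < e) :
    ∀ᶠ p in 𝓝 (x₀, k₀), ∀ t ∈ Icc 0 M, dist (S.f t p.1 p.2) (S.f t x₀ k₀) < e := by
  have hcont :
      ContinuousOn (fun p : (X × K) × ℝ => S.f p.2 p.1.1 p.1.2) (univ ×ˢ Icc 0 M) :=
    S.cont.comp (continuous_snd.prodMk continuous_fst).continuousOn fun p hp => hp.2.1
  obtain ⟨v, hv, hvf⟩ := isCompact_Icc.mem_uniformity_of_prod
    (f := fun p t => S.f t p.1 p.2) hcont (mem_univ (x₀, k₀)) (dist_mem_uniformity he)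
  rw [nhdsWithin_univ] at hv
  exact Filter.mem_of_superset hv hvf

theorem eventually_forall_dist_f_self_lt [CompactSpace X] [CompactSpace K] {e : ℝ}
    (he : 0 < e) : ∀ᶠ s in 𝓝[≥] (0 : ℝ), ∀ y k, dist (S.f s y k) y < e := by
  have hcont : ContinuousOn (fun p : ℝ × X × K => S.f p.1 p.2.1 p.2.2) (Ici 0 ×ˢ univ) :=
    S.cont.mono fun p hp => hp.1
  obtain ⟨v, hv, hvf⟩ := isCompact_univ.mem_uniformity_of_prod
    (f := fun (s : ℝ) (p : X × K) => S.f s p.1 p.2) hcont self_mem_Ici (dist_mem_uniformity he)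
  refine Filter.mem_of_superset hv fun s hs y k => ?_
  have := hvf s hs (y, k) (mem_univ _)
  rwa [S.map_zero] at this

theorem volume_setOf_dist_lt_eq_top [CompactSpace X] [CompactSpace K] {x y : X} {k : K}
    {e : ℝ} (hy : y ∈ S.omega x k) (he : 0 < e) :
    volume {t | 0 ≤ t ∧ dist (S.f t x k) y < e} = ∞ := by
  obtain ⟨δ, hδ, hδsub⟩ :=
    mem_nhdsGE_iff_exists_Icc_subset.mp (S.eventually_forall_dist_f_self_lt (half_pos he))
  obtain ⟨u, -, hutop, hulim⟩ := hy
  refine volume_eq_top_of_forall_exists_Ioc_subset hδ fun b => ?_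
  obtain ⟨n, hnb, hny⟩ := ((hutop.eventually_ge_atTop (max b δ)).and
    (hulim.eventually (ball_mem_nhds y (half_pos he)))).exists
  refine ⟨u n, le_of_max_le_left hnb, fun t ht => ?_⟩
  have ht0 : 0 ≤ t := by linarith [ht.1, le_max_right b δ]
  have hflow : S.f (u n) x k = S.f (u n - t) (S.f t x k) k := by
    rw [S.semigroup _ _ (sub_nonneg.mpr ht.2) ht0, sub_add_cancel]
  refine ⟨ht0, ?_⟩
  calc dist (S.f t x k) y ≤ dist (S.f t x k) (S.f (u n) x k) + dist (S.f (u n) x k) y :=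
        dist_triangle _ _ _
    _ < e / 2 + e / 2 := by
        refine add_lt_add ?_ hny
        rw [hflow, dist_comm]
        exact hδsub ⟨sub_nonneg.mpr ht.2, by linarith [ht.1]⟩ _ _
    _ = e := add_halves e

end PSemiflow

/-- Theorem 2.3: if there are `(x*,k*)`, a sequence `(xₙ,kₙ) → (x*,k*)`, a point
`x' ∈ ω(x*,k*)` and `ε > 0` with `dist(x', ω(xₙ,kₙ)) > ε` for all `n`, then the
system possesses τ₂-slow relaxations. -/
theorem omega_bifurcation_slowTau2 {X K : Type*} [MetricSpace X] [CompactSpace X]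
    [MetricSpace K] [CompactSpace K] (S : PSemiflow X K)
    (h : ∃ (xstar : X) (kstar : K) (xs : ℕ → X) (ks : ℕ → K) (x' : X) (ε : ℝ), 0 < ε ∧
      Tendsto xs atTop (𝓝 xstar) ∧ Tendsto ks atTop (𝓝 kstar) ∧
      x' ∈ S.omega xstar kstar ∧ ∀ n, infDist x' (S.omega (xs n) (ks n)) > ε) :
    S.SlowTau2 := by
  obtain ⟨xstar, kstar, xs, ks, x', ε, hε, hxs, hks, hx', hfar⟩ := h
  refine ⟨ε / 2, half_pos hε, fun T _ => ?_⟩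
  set A := {t | 0 ≤ t ∧ dist (S.f t xstar kstar) x' < ε / 4}
  have hA : volume A = ∞ := S.volume_setOf_dist_lt_eq_top hx' (by positivity)
  obtain ⟨M, hM⟩ :=
    exists_lt_measure_Iic_inter (c := ENNReal.ofReal T) (hA ▸ ENNReal.ofReal_lt_top)
  obtain ⟨n, hn⟩ := ((hxs.prodMk_nhds hks).eventually
    (S.eventually_forall_Icc_dist_lt M xstar kstar (by positivity : 0 < ε / 4))).exists
  refine ⟨xs n, ks n, hM.trans_le (measure_mono fun t ⟨htM, ht0, htx'⟩ => ⟨ht0, ?_⟩)⟩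
  have hclose : dist x' (S.f t (xs n) (ks n)) < ε / 2 := by
    calc dist x' (S.f t (xs n) (ks n))
        ≤ dist (S.f t xstar kstar) x' + dist (S.f t xstar kstar) (S.f t (xs n) (ks n)) :=
          dist_triangle_left _ _ _
      _ < ε / 4 + ε / 4 := add_lt_add htx' (by rw [dist_comm]; exact hn t ⟨ht0, htM⟩)
      _ = ε / 2 := by ring
  linarith [hfar n, infDist_le_infDist_add_dist (s := S.omega (xs n) (ks n)) (x := x')
    (y := S.f t (xs n) (ks n))]
end

section
/- Suppose there exist a point k* ∈ K, a sequence kₙ → k* in K, a point x' ∈ ω(k*), and a number ε > 0 such that dist(x', ω(kₙ)) > ε for every n. Then the parameter-dependent semiflow possesses η₂-slow relaxations. -/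
open Filter Topology Metric Set MeasureTheory
open scoped ENNReal

namespace PSemiflow

variable {X K : Type*} [MetricSpace X] [MetricSpace K] (S : PSemiflow X K)

/-- The relaxation time `η₂(x,k,ε)`: Lebesgue measure of the set of times the motion
spends outside the `ε`-neighbourhood of `ω(k)`. -/
noncomputable def eta2 (x : X) (k : K) (ε : ℝ) : ℝ≥0∞ :=
  volume {t : ℝ | 0 ≤ t ∧ ε ≤ infDist (S.f t x k) (S.omegaK k)}

/-- The system possesses η₂-slow relaxations. -/
def SlowEta2 : Prop := ∃ ε > (0:ℝ), ∀ T > (0:ℝ), ∃ x k, ENNReal.ofReal T < S.eta2 x k ε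

end PSemiflow

/-!
Let `x' ∈ ω(x, k*)`. By continuity of the flow at `(0, x', k*)` and the semigroup law, each
return of the `k*`-orbit of `x` close to `x'` keeps it within `ε/4` of `x'` for a fixed time
`δ`, and there are infinitely many returns; so for any `m` the orbit spends time `m δ` near `x'`
before some time `L`. On the compact interval `[0, L]` the orbit depends continuously on the
parameter uniformly in time, so for `kₙ` close to `k*` the `kₙ`-orbit of `x` spends the same
time within `ε/2` of `x'`, hence at distance at least `ε/2` from `ω(kₙ)`.
-/

lemma exists_ofReal_mul_le_volume_inter_Icc {A : Set ℝ} {δ : ℝ} (hδ : 0 ≤ δ)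
    (hA : ∀ B, ∃ s, B < s ∧ Ico s (s + δ) ⊆ A) (m : ℕ) :
    ∃ L, 0 ≤ L ∧ ENNReal.ofReal (m * δ) ≤ volume (A ∩ Icc 0 L) := by
  induction m with
  | zero => exact ⟨0, le_rfl, by simp⟩
  | succ m ih =>
    obtain ⟨L, hL, hvol⟩ := ih
    obtain ⟨s, hLs, hsA⟩ := hA L
    have hdisj : Disjoint (A ∩ Icc 0 L) (Ico s (s + δ)) :=
      disjoint_left.2 fun r hr hr' => (hr.2.2.trans_lt hLs).not_ge hr'.1
    have hsub : A ∩ Icc 0 L ∪ Ico s (s + δ) ⊆ A ∩ Icc 0 (s + δ) :=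
      union_subset (inter_subset_inter_right _ (Icc_subset_Icc_right (by linarith)))
        (subset_inter hsA fun r hr => ⟨by linarith [hr.1], hr.2.le⟩)
    refine ⟨s + δ, by linarith, ?_⟩
    calc ENNReal.ofReal ((m + 1 : ℕ) * δ) = ENNReal.ofReal (m * δ) + ENNReal.ofReal δ := by
          rw [← ENNReal.ofReal_add (by positivity) hδ]; push_cast; ring_nf
      _ ≤ volume (A ∩ Icc 0 L) + volume (Ico s (s + δ)) := by
          rw [Real.volume_Ico, add_sub_cancel_left]; gcongr
      _ = volume (A ∩ Icc 0 L ∪ Ico s (s + δ)) := (measure_union hdisj measurableSet_Ico).symm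
      _ ≤ volume (A ∩ Icc 0 (s + δ)) := measure_mono hsub

namespace PSemiflow

variable {X K : Type*} [MetricSpace X] [MetricSpace K] (S : PSemiflow X K)

lemma exists_forall_dist_lt_of_dist_lt (y : X) (k : K) {θ : ℝ} (hθ : 0 < θ) :
    ∃ δ > 0, ∃ ρ > 0, ∀ z, dist z y < ρ → ∀ s ∈ Icc 0 δ, dist (S.f s z k) y < θ := by
  have hcont := S.cont ((0, y, k) : ℝ × X × K) (show (0 : ℝ) ≤ 0 from le_rfl)
  obtain ⟨ρ, hρ, hball⟩ := Metric.continuousWithinAt_iff.1 hcont θ hθ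
  refine ⟨ρ / 2, half_pos hρ, ρ, hρ, fun z hz s hs => ?_⟩
  have hdist : dist ((s, z, k) : ℝ × X × K) (0, y, k) < ρ := by
    simp only [Prod.dist_eq, dist_self, Real.dist_eq, sub_zero, abs_of_nonneg hs.1]
    exact max_lt (by linarith [hs.2]) (max_lt hz hρ)
  simpa only [S.map_zero] using hball (show (0 : ℝ) ≤ s from hs.1) hdist

lemma exists_Ico_subset_of_mem_omega {x y : X} {k : K} (hy : y ∈ S.omega x k) {θ : ℝ}
    (hθ : 0 < θ) :
    ∃ δ > 0, ∀ B, ∃ s, B < s ∧ Ico s (s + δ) ⊆ {r | dist (S.f r x k) y < θ} := by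
  obtain ⟨t, ht0, htop, hlim⟩ := hy
  obtain ⟨δ, hδ, ρ, hρ, hnear⟩ := S.exists_forall_dist_lt_of_dist_lt y k hθ
  refine ⟨δ, hδ, fun B => ?_⟩
  obtain ⟨n, hBn, hn⟩ :=
    ((htop.eventually_gt_atTop B).and (hlim (Metric.ball_mem_nhds y hρ))).exists
  refine ⟨t n, hBn, fun r hr => ?_⟩
  have hflow : S.f (r - t n) (S.f (t n) x k) k = S.f r x k := by
    rw [S.semigroup _ _ (by linarith [hr.1]) (ht0 n), sub_add_cancel]
  rw [mem_ofPred_eq, ← hflow]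
  exact hnear _ hn _ ⟨by linarith [hr.1], by linarith [hr.2]⟩

lemma eventually_forall_Icc_dist_lt_s3 (x : X) (k₀ : K) (L : ℝ) {θ : ℝ} (hθ : 0 < θ) :
    ∀ᶠ k in 𝓝 k₀, ∀ r ∈ Icc 0 L, dist (S.f r x k) (S.f r x k₀) < θ := by
  suffices ∀ᶠ k in 𝓝 k₀, ∀ r ∈ Icc 0 L, 0 ≤ r → dist (S.f r x k) (S.f r x k₀) < θ from
    this.mono fun k hk r hr => hk r hr hr.1
  refine isCompact_Icc.eventually_forall_of_forall_eventually fun r₀ hr₀ => ?_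
  have hF : ContinuousWithinAt (fun p : K × ℝ => S.f p.2 x p.1) {p | 0 ≤ p.2} (k₀, r₀) :=
    (S.cont (r₀, x, k₀) hr₀.1).comp (x := (k₀, r₀)) (f := fun p : K × ℝ => (p.2, x, p.1))
      (by fun_prop : Continuous _).continuousWithinAt fun p hp => hp
  have hF₀ : ContinuousWithinAt (fun p : K × ℝ => S.f p.2 x k₀) {p | 0 ≤ p.2} (k₀, r₀) :=
    (S.cont (r₀, x, k₀) hr₀.1).comp (x := (k₀, r₀)) (f := fun p : K × ℝ => (p.2, x, k₀))
      (by fun_prop : Continuous _).continuousWithinAt fun p hp => hp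
  have hlt : ∀ᶠ p in 𝓝[{p : K × ℝ | 0 ≤ p.2}] (k₀, r₀),
      dist (S.f p.2 x p.1) (S.f p.2 x k₀) < θ :=
    (hF.dist hF₀).eventually_lt_const (by rwa [dist_self])
  exact eventually_nhdsWithin_iff.1 hlt

end PSemiflow

theorem omegaK_bifurcation_slowEta2_general {X K : Type*} [MetricSpace X]
    [MetricSpace K] (S : PSemiflow X K)
    (h : ∃ (kstar : K) (ks : ℕ → K) (x' : X) (ε : ℝ), 0 < ε ∧
      Tendsto ks atTop (𝓝 kstar) ∧
      x' ∈ S.omegaK kstar ∧ ∀ n, infDist x' (S.omegaK (ks n)) > ε) :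
    S.SlowEta2 := by
  obtain ⟨k₀, ks, x', ε, hε, hks, hx', hfar⟩ := h
  obtain ⟨x, hx⟩ := mem_iUnion.1 hx'
  obtain ⟨δ, hδ, hvisits⟩ := S.exists_Ico_subset_of_mem_omega hx (by positivity : 0 < ε / 4)
  refine ⟨ε / 2, half_pos hε, fun T hT => ?_⟩
  obtain ⟨m, hm⟩ := exists_nat_gt (T / δ)
  obtain ⟨L, -, hvol⟩ := exists_ofReal_mul_le_volume_inter_Icc hδ.le hvisits m
  obtain ⟨n, hn⟩ := (hks.eventually
    (S.eventually_forall_Icc_dist_lt_s3 x k₀ L (by positivity : 0 < ε / 4))).exists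
  have hTm : T < m * δ := (div_lt_iff₀ hδ).1 hm
  refine ⟨x, ks n, ?_⟩
  have hfar_traj : ∀ r ∈ {r | dist (S.f r x k₀) x' < ε / 4} ∩ Icc 0 L,
      ε / 2 ≤ infDist (S.f r x (ks n)) (S.omegaK (ks n)) := by
    rintro r ⟨hr, hrL⟩
    have hclose : dist (S.f r x (ks n)) x' < ε / 2 := by
      linarith [dist_triangle (S.f r x (ks n)) (S.f r x k₀) x', hn r hrL, hr.out]
    linarith [infDist_le_infDist_add_dist (x := x') (y := S.f r x (ks n))
      (s := S.omegaK (ks n)), dist_comm x' (S.f r x (ks n)), hfar n]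
  calc ENNReal.ofReal T < ENNReal.ofReal (m * δ) :=
        (ENNReal.ofReal_lt_ofReal_iff (hT.trans hTm)).2 hTm
    _ ≤ volume ({r | dist (S.f r x k₀) x' < ε / 4} ∩ Icc 0 L) := hvol
    _ ≤ S.eta2 x (ks n) (ε / 2) :=
        measure_mono fun r hr => ⟨hr.2.1, hfar_traj r hr⟩

/-- Theorem 2.4: if there are `k* ∈ K`, a sequence `kₙ → k*`, a point `x' ∈ ω(k*)`
and `ε > 0` with `dist(x', ω(kₙ)) > ε` for all `n`, then the system possesses
η₂-slow relaxations. -/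
theorem omegaK_bifurcation_slowEta2 {X K : Type*} [MetricSpace X] [CompactSpace X]
    [MetricSpace K] [CompactSpace K] (S : PSemiflow X K)
    (h : ∃ (kstar : K) (ks : ℕ → K) (x' : X) (ε : ℝ), 0 < ε ∧
      Tendsto ks atTop (𝓝 kstar) ∧
      x' ∈ S.omegaK kstar ∧ ∀ n, infDist x' (S.omegaK (ks n)) > ε) :
    S.SlowEta2 :=
  omegaK_bifurcation_slowEta2_general S h
end

section
/- Suppose there exist x ∈ X and k ∈ K such that the (k,x)-motion is whole and its α-limit set α(x,k) is not contained in the closure of ω(k). Then the parameter-dependent semiflow possesses η₂-slow relaxations. -/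
open Filter Topology Metric Set MeasureTheory
open scoped ENNReal

namespace PSemiflow

variable {X K : Type*} [MetricSpace X] [MetricSpace K] (S : PSemiflow X K)

/-- The (k,x)-motion is whole: it extends to a full trajectory `φ : ℝ → X`. -/
def IsWholeMotion (x : X) (k : K) (φ : ℝ → X) : Prop :=
  φ 0 = x ∧ ∀ s t : ℝ, 0 ≤ t → S.f t (φ s) k = φ (s + t)

end PSemiflow

/-- The α-limit set of a whole motion `φ`: all limits of `φ(tₙ)` with `tₙ → -∞`. -/
def alphaLimit {X : Type*} [MetricSpace X] (φ : ℝ → X) : Set X :=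
  {y | ∃ t : ℕ → ℝ, Tendsto t atTop atBot ∧ Tendsto (fun n => φ (t n)) atTop (𝓝 y)}

/-!
Let `y ∈ α(x,k)` lie at distance `d > 0` from `ω(k)` (which is nonempty since `X` is compact).
By continuity of the semiflow at `(0, y, k)` there is `τ > 0` such that any motion passing within
`τ` of `y` stays `d/2`-far from `ω(k)` for a time `τ`. The whole motion passes near `y` at
arbitrarily negative times, so starting it early enough it spends `N` disjoint time intervals
of length `τ` far from `ω(k)`, for any `N`.
-/

theorem exists_natCast_mul_le_volume_inter_Icc {B : Set ℝ} {τ : ℝ}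
    (h : ∀ a, ∃ s ≤ a, Icc s (s + τ) ⊆ B) (N : ℕ) (a : ℝ) :
    ∃ u ≤ a, N * ENNReal.ofReal τ ≤ volume (B ∩ Icc u a) := by
  induction N with
  | zero => exact ⟨a, le_rfl, by simp⟩
  | succ N ih =>
    obtain ⟨u, hua, hu⟩ := ih
    -- the margin `|τ| + 1` puts the new interval strictly left of `u`, whatever the sign of `τ`
    obtain ⟨s, hsu, hsB⟩ := h (u - |τ| - 1)
    have hτ : τ ≤ |τ| := le_abs_self τ
    have hτ' : 0 ≤ |τ| := abs_nonneg τ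
    have hdisj : Disjoint (B ∩ Icc u a) (Icc s (s + τ)) :=
      disjoint_left.mpr fun r hr hr' => by linarith [hr.2.1, hr'.2]
    have hsub : B ∩ Icc u a ∪ Icc s (s + τ) ⊆ B ∩ Icc s a :=
      union_subset (inter_subset_inter_right _ (Icc_subset_Icc_left (by linarith)))
        (subset_inter hsB (Icc_subset_Icc_right (by linarith)))
    refine ⟨s, by linarith, ?_⟩
    calc ((N + 1 : ℕ) : ℝ≥0∞) * ENNReal.ofReal τ
        = N * ENNReal.ofReal τ + volume (Icc s (s + τ)) := by
          rw [Real.volume_Icc, add_sub_cancel_left]; push_cast; ring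
      _ ≤ volume (B ∩ Icc u a) + volume (Icc s (s + τ)) := by gcongr
      _ = volume (B ∩ Icc u a ∪ Icc s (s + τ)) := (measure_union hdisj measurableSet_Icc).symm
      _ ≤ volume (B ∩ Icc s a) := measure_mono hsub

theorem exists_natCast_mul_le_volume_inter_Ici {B : Set ℝ} {τ : ℝ}
    (h : ∀ a, ∃ s ≤ a, Icc s (s + τ) ⊆ B) (N : ℕ) :
    ∃ u, N * ENNReal.ofReal τ ≤ volume (B ∩ Ici u) := by
  obtain ⟨u, -, hu⟩ := exists_natCast_mul_le_volume_inter_Icc h N 0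
  exact ⟨u, hu.trans (measure_mono (inter_subset_inter_right _ Icc_subset_Ici_self))⟩

theorem frequently_mem_of_mem_alphaLimit {X : Type*} [MetricSpace X] {φ : ℝ → X} {y : X}
    (hy : y ∈ alphaLimit φ) {U : Set X} (hU : U ∈ 𝓝 y) : ∃ᶠ s in atBot, φ s ∈ U := by
  obtain ⟨t, ht, hφt⟩ := hy
  exact ht.frequently (hφt.eventually hU).frequently

namespace PSemiflow
variable {X K : Type*} [MetricSpace X] [MetricSpace K] (S : PSemiflow X K)

theorem omegaK_nonempty [CompactSpace X] (x : X) (k : K) : (S.omegaK k).Nonempty :=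
  (S.omega_nonempty x k).mono (subset_iUnion (S.omega · k) x)

theorem exists_forall_dist_f_lt (y : X) (k : K) {ε : ℝ} (hε : 0 < ε) :
    ∃ τ > 0, ∀ z, dist z y < τ → ∀ t ∈ Icc 0 τ, dist (S.f t z k) y < ε := by
  have hcont : Tendsto (fun p : ℝ × X × K => S.f p.1 p.2.1 p.2.2)
      (𝓝[{p | 0 ≤ p.1}] (0, y, k)) (𝓝 y) := by
    simpa only [ContinuousWithinAt, S.map_zero] using S.cont (0, y, k) (le_refl (0 : ℝ))
  obtain ⟨δ, hδ, hball⟩ := tendsto_nhdsWithin_nhds.mp hcont ε hε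
  refine ⟨δ / 2, by positivity, fun z hz t ht => hball (x := (t, z, k)) ht.1 ?_⟩
  have ht' : dist t 0 < δ := by
    rw [Real.dist_0_eq_abs, abs_of_nonneg ht.1]; linarith [ht.2]
  simp only [Prod.dist_eq, dist_self]
  exact max_lt ht' (max_lt (by linarith) hδ)

theorem exists_forall_le_infDist_f {A : Set X} (hA : A.Nonempty) {y : X} (hy : y ∉ closure A)
    (k : K) : ∃ ε > 0, ∃ τ > 0, ∀ z, dist z y < τ → ∀ t ∈ Icc 0 τ,
      ε ≤ infDist (S.f t z k) A := by
  have hd : 0 < infDist y A := (infDist_pos_iff_notMem_closure hA).mp hy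
  obtain ⟨τ, hτ, hnear⟩ := S.exists_forall_dist_f_lt y k (half_pos hd)
  refine ⟨infDist y A / 2, half_pos hd, τ, hτ, fun z hz t ht => ?_⟩
  have hclose := hnear z hz t ht
  have htri := infDist_le_infDist_add_dist (s := A) (x := y) (y := S.f t z k)
  rw [dist_comm] at htri
  linarith

theorem IsWholeMotion.eta2_eq {S : PSemiflow X K} {x : X} {k : K} {φ : ℝ → X}
    (hφ : S.IsWholeMotion x k φ) (u ε : ℝ) :
    S.eta2 (φ u) k ε = volume ({r | ε ≤ infDist (φ r) (S.omegaK k)} ∩ Ici u) := by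
  rw [eta2, ← measure_preimage_add volume u (_ ∩ Ici u)]
  congr 1
  ext t
  simp only [mem_ofPred_eq, mem_preimage, mem_inter_iff, mem_Ici, le_add_iff_nonneg_right]
  constructor
  · rintro ⟨ht, hε⟩; exact ⟨by rwa [← hφ.2 u t ht], ht⟩
  · rintro ⟨hε, ht⟩; exact ⟨ht, by rwa [hφ.2 u t ht]⟩

end PSemiflow

theorem alpha_not_subset_closure_omegaK_slowEta2_general {X K : Type*} [MetricSpace X]
    [CompactSpace X] [MetricSpace K] (S : PSemiflow X K)
    (h : ∃ (x : X) (k : K) (φ : ℝ → X), S.IsWholeMotion x k φ ∧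
      ¬ alphaLimit φ ⊆ closure (S.omegaK k)) :
    S.SlowEta2 := by
  obtain ⟨x, k, φ, hφ, hα⟩ := h
  obtain ⟨y, hyα, hy⟩ := not_subset.mp hα
  obtain ⟨ε, hε, τ, hτ, hfar⟩ := S.exists_forall_le_infDist_f (S.omegaK_nonempty x k) hy k
  have hB : ∀ a, ∃ s ≤ a, Icc s (s + τ) ⊆ {r | ε ≤ infDist (φ r) (S.omegaK k)} := by
    intro a
    obtain ⟨s, hsa, hs⟩ :=
      frequently_atBot.mp (frequently_mem_of_mem_alphaLimit hyα (ball_mem_nhds y hτ)) a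
    refine ⟨s, hsa, fun r hr => ?_⟩
    have hrs : r - s ∈ Icc 0 τ := ⟨by linarith [hr.1], by linarith [hr.2]⟩
    have := hfar _ hs (r - s) hrs
    rwa [hφ.2 s _ hrs.1, add_sub_cancel] at this
  refine ⟨ε, hε, fun T hT => ?_⟩
  obtain ⟨N, hN⟩ := exists_nat_gt (T / τ)
  have hTN : T < N * τ := (div_lt_iff₀ hτ).mp hN
  obtain ⟨u, hu⟩ := exists_natCast_mul_le_volume_inter_Ici hB N
  refine ⟨φ u, k, ?_⟩
  rw [hφ.eta2_eq]
  calc ENNReal.ofReal T < ENNReal.ofReal (N * τ) :=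
        (ENNReal.ofReal_lt_ofReal_iff (hT.trans hTN)).mpr hTN
    _ = N * ENNReal.ofReal τ := by rw [ENNReal.ofReal_mul N.cast_nonneg, ENNReal.ofReal_natCast]
    _ ≤ _ := hu

/-- Theorem 2.6: if for some `x ∈ X`, `k ∈ K` the `(k,x)`-motion is whole and its
α-limit set is not contained in the closure of `ω(k)`, then the system possesses
η₂-slow relaxations. -/
theorem alpha_not_subset_closure_omegaK_slowEta2 {X K : Type*} [MetricSpace X]
    [CompactSpace X] [MetricSpace K] [CompactSpace K] (S : PSemiflow X K)
    (h : ∃ (x : X) (k : K) (φ : ℝ → X), S.IsWholeMotion x k φ ∧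
      ¬ alphaLimit φ ⊆ closure (S.omegaK k)) :
    S.SlowEta2 :=
  alpha_not_subset_closure_omegaK_slowEta2_general S h
end

section
/- For a single semiflow f on a compact metric space X and for every ε > 0, the function x ↦ η₁(x,ε) = inf{t ≥ 0 : dist(f(t,x), ω_f) < ε} is bounded above on X; that is, there is a constant C such that η₁(x,ε) ≤ C for every x ∈ X. -/
/-!
Every orbit accumulates somewhere, and each accumulation point lies in `ω_f`, so every point
enters the `ε`-neighbourhood of `ω_f` at some time. Since the time-`t` maps are continuous,
`η₁(·,ε) < c` is an open condition, i.e. `η₁(·,ε)` is upper semicontinuous, hence bounded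
above on the compact space `X`.
-/

open Filter Topology Metric Set MeasureTheory
open scoped ENNReal

/-- A semiflow on a metric space `X`: a map `f : [0,∞) × X → X` (encoded with time
in `ℝ`, with conditions only for nonnegative times), continuous on `[0,∞) × X`,
satisfying the semigroup identities, and injective for each fixed time. -/
structure Semiflow (X : Type*) [MetricSpace X] where
  f : ℝ → X → X
  cont : ContinuousOn (fun p : ℝ × X => f p.1 p.2) {p : ℝ × X | 0 ≤ p.1}
  map_zero : ∀ x, f 0 x = x
  semigroup : ∀ t t' : ℝ, 0 ≤ t → 0 ≤ t' → ∀ x, f t (f t' x) = f (t + t') x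
  inj : ∀ t : ℝ, 0 ≤ t → Function.Injective fun x => f t x

namespace Semiflow

variable {X : Type*} [MetricSpace X] (S : Semiflow X)

/-- The ω-limit set `ω(x)`: all limits of `f(tₙ,x)` along sequences `tₙ → ∞`. -/
def omega (x : X) : Set X :=
  {y | ∃ t : ℕ → ℝ, (∀ n, 0 ≤ t n) ∧ Tendsto t atTop atTop ∧
      Tendsto (fun n => S.f (t n) x) atTop (𝓝 y)}

/-- The complete ω-limit set `ω_f = ⋃ₓ ω(x)`. -/
def omegaF : Set X := ⋃ x : X, S.omega x

/-- `η₁(x,ε)`: time of the first entry into the `ε`-neighbourhood of `ω_f`. -/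
noncomputable def eta1 (x : X) (ε : ℝ) : ℝ :=
  sInf {t : ℝ | 0 ≤ t ∧ infDist (S.f t x) S.omegaF < ε}

end Semiflow

namespace Semiflow

variable {X : Type*} [MetricSpace X] (S : Semiflow X)

theorem continuous_f {t : ℝ} (ht : 0 ≤ t) : Continuous (S.f t) :=
  S.cont.comp_continuous (continuous_const.prodMk continuous_id) fun _ => ht

theorem exists_infDist_omegaF_lt [CompactSpace X] {ε : ℝ} (hε : 0 < ε) (x : X) :
    ∃ t, 0 ≤ t ∧ infDist (S.f t x) S.omegaF < ε := by
  obtain ⟨y, -, φ, hφ, hlim⟩ :=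
    isCompact_univ.tendsto_subseq fun n : ℕ => mem_univ (S.f n x)
  have hy : y ∈ S.omegaF :=
    mem_iUnion.2 ⟨x, fun n => (φ n : ℝ), fun n => Nat.cast_nonneg _,
      tendsto_natCast_atTop_atTop.comp hφ.tendsto_atTop, hlim⟩
  obtain ⟨N, hN⟩ := Metric.tendsto_atTop.1 hlim ε hε
  exact ⟨φ N, Nat.cast_nonneg _, (infDist_le_dist_of_mem hy).trans_lt (hN N le_rfl)⟩

theorem eta1_lt_iff [CompactSpace X] {ε : ℝ} (hε : 0 < ε) {x : X} {c : ℝ} :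
    S.eta1 x ε < c ↔ ∃ t ∈ Ico 0 c, infDist (S.f t x) S.omegaF < ε := by
  obtain ⟨t₀, ht₀, ht₀ε⟩ := S.exists_infDist_omegaF_lt hε x
  have hbdd : BddBelow {t | 0 ≤ t ∧ infDist (S.f t x) S.omegaF < ε} := ⟨0, fun _ hs => hs.1⟩
  rw [eta1, csInf_lt_iff hbdd ⟨t₀, ht₀, ht₀ε⟩]
  constructor
  · rintro ⟨s, ⟨hs, hsε⟩, hsc⟩
    exact ⟨s, ⟨hs, hsc⟩, hsε⟩
  · rintro ⟨s, ⟨hs, hsc⟩, hsε⟩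
    exact ⟨s, ⟨hs, hsε⟩, hsc⟩

theorem upperSemicontinuous_eta1 [CompactSpace X] {ε : ℝ} (hε : 0 < ε) :
    UpperSemicontinuous (S.eta1 · ε) := by
  refine upperSemicontinuous_iff_isOpen_preimage.2 fun c => ?_
  have hpre : (S.eta1 · ε) ⁻¹' Iio c = ⋃ t ∈ Ico 0 c, {x | infDist (S.f t x) S.omegaF < ε} := by
    ext x
    simp only [mem_preimage, mem_Iio, S.eta1_lt_iff hε, mem_iUnion₂, mem_ofPred_eq, exists_prop]
  rw [hpre]
  exact isOpen_biUnion fun t ht =>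
    isOpen_lt ((continuous_infDist_pt _).comp (S.continuous_f ht.1)) continuous_const

end Semiflow

/-- Proposition 2.2: for a single semiflow `η₁(·,ε)` is bounded above on `X` for
every `ε > 0`. -/
theorem eta1_bounded {X : Type*} [MetricSpace X] [CompactSpace X] (S : Semiflow X) :
    ∀ ε > (0:ℝ), ∃ C : ℝ, ∀ x : X, S.eta1 x ε ≤ C := by
  intro ε hε
  obtain ⟨C, hC⟩ := ((S.upperSemicontinuous_eta1 hε).upperSemicontinuousOn univ).bddAbove_of_isCompact
    isCompact_univ
  exact ⟨C, fun x => hC ⟨x, mem_univ x, rfl⟩⟩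
end

section
/- Let f be a semiflow on a compact metric space X possessing η₂-slow relaxations: for some ε > 0 the function x ↦ η₂(x,ε) = Lebesgue measure of {t ≥ 0 : dist(f(t,x), ω_f) ≥ ε} is unbounded above on X. Then there exists a non-wandering point x* ∈ X which does not belong to the closure of ω_f. -/
open Filter Topology Metric Set MeasureTheory
open scoped ENNReal

namespace Semiflow

variable {X : Type*} [MetricSpace X] (S : Semiflow X)

/-- `η₂(x,ε)`: Lebesgue measure of the set of times spent outside the
`ε`-neighbourhood of `ω_f`. -/
noncomputable def eta2 (x : X) (ε : ℝ) : ℝ≥0∞ :=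
  volume {t : ℝ | 0 ≤ t ∧ ε ≤ infDist (S.f t x) S.omegaF}

/-- The semiflow possesses η₂-slow relaxations. -/
def SlowEta2 : Prop := ∃ ε > (0:ℝ), ∀ T > (0:ℝ), ∃ x, ENNReal.ofReal T < S.eta2 x ε

/-- `x` is a non-wandering point of the semiflow. -/
def NonWandering (x : X) : Prop :=
  ∀ U ∈ 𝓝 x, ∀ T > (0:ℝ), ∃ t > T, ((fun y => S.f t y) '' U ∩ U).Nonempty

end Semiflow

/-! If every point of the compact set `K = {x | ε ≤ dist(x, ω_f)}` were wandering, finitely many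
neighbourhoods `Uᵢ`, with `f(t, Uᵢ) ∩ Uᵢ = ∅` for `t > Tᵢ`, would cover `K`. Two visits of an orbit
to `Uᵢ` are at most `Tᵢ` apart, so every orbit spends time at most `∑ Tᵢ` in `K`, and `η₂(·, ε)`
would be bounded. -/

namespace Semiflow

variable {X : Type*} [MetricSpace X] (S : Semiflow X)

def visitTimes (x : X) (U : Set X) : Set ℝ := {s | 0 ≤ s ∧ S.f s x ∈ U}

lemma eta2_eq_volume_visitTimes (x : X) (ε : ℝ) :
    S.eta2 x ε = volume (S.visitTimes x {y | ε ≤ infDist y S.omegaF}) :=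
  rfl

variable {S}

lemma dist_le_of_mem_visitTimes {U : Set X} {T : ℝ}
    (hU : ∀ t > T, ¬((fun y => S.f t y) '' U ∩ U).Nonempty) {x : X} {a s : ℝ}
    (ha : a ∈ S.visitTimes x U) (hs : s ∈ S.visitTimes x U) : dist a s ≤ T := by
  wlog has : a ≤ s generalizing a s
  · rw [dist_comm]
    exact this hs ha (le_of_not_ge has)
  rw [Real.dist_eq, abs_sub_comm, abs_of_nonneg (sub_nonneg.2 has)]
  by_contra! hT
  refine hU (s - a) hT ⟨S.f s x, ⟨S.f a x, ha.2, ?_⟩, hs.2⟩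
  simp only [S.semigroup (s - a) a (sub_nonneg.2 has) ha.1, sub_add_cancel]

lemma volume_visitTimes_le {U : Set X} {T : ℝ}
    (hU : ∀ t > T, ¬((fun y => S.f t y) '' U ∩ U).Nonempty) (x : X) :
    volume (S.visitTimes x U) ≤ ENNReal.ofReal T :=
  (Real.volume_le_diam _).trans <| Metric.ediam_le fun _ ha _ hs => by
    rw [edist_dist]
    exact ENNReal.ofReal_le_ofReal (dist_le_of_mem_visitTimes hU ha hs)

lemma exists_volume_visitTimes_le_of_isCompact {K : Set X} (hK : IsCompact K)
    (hwand : ∀ y ∈ K, ¬S.NonWandering y) :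
    ∃ C : ℝ, ∀ x, volume (S.visitTimes x K) ≤ ENNReal.ofReal C := by
  have hnbhd : ∀ y ∈ K, ∃ U ∈ 𝓝 y, ∃ T > (0 : ℝ),
      ∀ t > T, ¬((fun z => S.f t z) '' U ∩ U).Nonempty := by
    simpa [NonWandering] using hwand
  choose! U hU T hT hUT using hnbhd
  obtain ⟨F, hFK, hcover⟩ := hK.elim_nhds_subcover U hU
  refine ⟨∑ y ∈ F, T y, fun x => ?_⟩
  have hsub : S.visitTimes x K ⊆ ⋃ y ∈ F, S.visitTimes x (U y) := fun s hs => by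
    simpa [visitTimes, hs.1] using hcover hs.2
  calc volume (S.visitTimes x K)
      ≤ ∑ y ∈ F, volume (S.visitTimes x (U y)) :=
        (measure_mono hsub).trans (measure_biUnion_finset_le F _)
    _ ≤ ∑ y ∈ F, ENNReal.ofReal (T y) :=
        Finset.sum_le_sum fun y hy => volume_visitTimes_le (hUT y (hFK y hy)) x
    _ = ENNReal.ofReal (∑ y ∈ F, T y) :=
        (ENNReal.ofReal_sum_of_nonneg fun y hy => (hT y (hFK y hy)).le).symm

end Semiflow

/-- Theorem 3.1: if a semiflow possesses η₂-slow relaxations, then there is a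
non-wandering point `x* ∈ X` which does not belong to the closure of `ω_f`. -/
theorem slowEta2_nonwandering {X : Type*} [MetricSpace X] [CompactSpace X]
    (S : Semiflow X) (h : S.SlowEta2) :
    ∃ xstar : X, S.NonWandering xstar ∧ xstar ∉ closure S.omegaF := by
  obtain ⟨ε, hε, hslow⟩ := h
  by_contra! hcon
  set K := {y | ε ≤ infDist y S.omegaF}
  have hK : IsCompact K := (isClosed_le continuous_const (continuous_infDist_pt _)).isCompact
  have hwand : ∀ y ∈ K, ¬S.NonWandering y := fun y hy hy' => by
    have : ε ≤ 0 := infDist_zero_of_mem_closure (hcon y hy') ▸ hy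
    linarith
  obtain ⟨C, hC⟩ := S.exists_volume_visitTimes_le_of_isCompact hK hwand
  obtain ⟨x, hx⟩ := hslow (max C 1) (by positivity)
  rw [S.eta2_eq_volume_visitTimes] at hx
  exact (hx.trans_le ((hC x).trans (ENNReal.ofReal_le_ofReal (le_max_left _ _)))).false
end

section
/- Let f be a semiflow on a compact metric space X, and suppose there exists a closed invariant set W ⊆ X which is isolated (there is λ > 0 such that every y ∈ ω_f with dist(y,W) < λ belongs to W) and not Lyapunov stable. Then f possesses η₃-slow relaxations: for some ε > 0 the function x ↦ η₃(x,ε) = inf{t ≥ 0 : dist(f(t',x), ω_f) < ε for all t' > t} is unbounded above on X. -/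
open Filter Topology Metric Set MeasureTheory
open scoped ENNReal

namespace Semiflow

variable {X : Type*} [MetricSpace X] (S : Semiflow X)

/-- `η₃(x,ε)`: time of the final entry into the `ε`-neighbourhood of `ω_f`. -/
noncomputable def eta3 (x : X) (ε : ℝ) : ℝ :=
  sInf {t : ℝ | 0 ≤ t ∧ ∀ t' > t, infDist (S.f t' x) S.omegaF < ε}

/-- The semiflow possesses η₃-slow relaxations. -/
def SlowEta3 : Prop := ∃ ε > (0:ℝ), ∀ T > (0:ℝ), ∃ x, S.eta3 x ε > T

/-- `W` is an invariant set: each of its points lies on a whole trajectory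
contained in `W`. -/
def IsInvariantSet (W : Set X) : Prop :=
  ∀ x ∈ W, ∃ φ : ℝ → X, φ 0 = x ∧ (∀ s t : ℝ, 0 ≤ t → S.f t (φ s) = φ (s + t)) ∧
    range φ ⊆ W

/-- `W` is Lyapunov stable. -/
def LyapunovStable (W : Set X) : Prop :=
  ∀ ε > (0:ℝ), ∃ δ > (0:ℝ), ∀ x : X, infDist x W < δ →
    ∀ t : ℝ, 0 ≤ t → infDist (S.f t x) W < ε

end Semiflow

/-!
Fix `ε` small compared with the instability radius of `W` and its isolation radius `lam`.
By continuous dependence on initial data over `[0, T]`, orbits starting close enough to `W`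
stay `ε`-close to it up to time `T`; instability nevertheless pushes some of them far away,
so by the intermediate value theorem one of them is at distance exactly `2ε` from `W` at
some time `t > T`. Isolation of `W` makes every point of `ω_f` within `lam` of `W` lie in
`W`, so that point is at least `ε` away from `ω_f`, whence `η₃(x, ε) ≥ t > T`.
-/

lemma Metric.le_infDist_of_forall_infDist_lt_imp_mem {X : Type*} [MetricSpace X]
    {Ω W : Set X} {lam ε : ℝ} {z : X} (hΩ : Ω.Nonempty)
    (hiso : ∀ y ∈ Ω, infDist y W < lam → y ∈ W) (hε : ε ≤ infDist z W)
    (hlam : infDist z W + ε ≤ lam) : ε ≤ infDist z Ω := by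
  by_contra! hlt
  obtain ⟨y, hyΩ, hzy⟩ := (infDist_lt_iff hΩ).1 hlt
  have hyW : y ∈ W := hiso y hyΩ <| by
    calc infDist y W ≤ infDist z W + dist y z := infDist_le_infDist_add_dist
      _ < lam := by rw [dist_comm]; linarith
  linarith [infDist_le_dist_of_mem (x := z) hyW]

namespace Semiflow

variable {X : Type*} [MetricSpace X] (S : Semiflow X)

lemma continuousOn_orbit (x : X) : ContinuousOn (fun t => S.f t x) (Ici 0) :=
  S.cont.comp (continuous_id.prodMk continuous_const).continuousOn fun _ ht => ht

lemma IsInvariantSet.mapsTo {S : Semiflow X} {W : Set X} (hW : S.IsInvariantSet W) {t : ℝ}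
    (ht : 0 ≤ t) : MapsTo (S.f t) W W := by
  intro w hw
  obtain ⟨φ, hφ0, hφ, hφW⟩ := hW w hw
  have := hφ 0 t ht
  rw [hφ0] at this
  exact this ▸ hφW (mem_range_self _)

lemma omega_subset_omegaF (x : X) : S.omega x ⊆ S.omegaF :=
  subset_iUnion S.omega x

section Compact

variable [CompactSpace X]

lemma exists_mem_omega_tendsto_subseq (x : X) {u : ℕ → ℝ} (hu0 : ∀ n, 0 ≤ u n)
    (hu : Tendsto u atTop atTop) :
    ∃ y ∈ S.omega x, ∃ φ : ℕ → ℕ, StrictMono φ ∧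
      Tendsto (fun n => S.f (u (φ n)) x) atTop (𝓝 y) := by
  obtain ⟨y, -, φ, hφ, hy⟩ := isCompact_univ.tendsto_subseq fun n => mem_univ (S.f (u n) x)
  exact ⟨y, ⟨u ∘ φ, fun n => hu0 (φ n), hu.comp hφ.tendsto_atTop, hy⟩, φ, hφ, hy⟩

lemma omegaF_nonempty [Nonempty X] : S.omegaF.Nonempty := by
  obtain ⟨y, hy, -⟩ := S.exists_mem_omega_tendsto_subseq (Classical.arbitrary X)
    (fun n => Nat.cast_nonneg n) tendsto_natCast_atTop_atTop
  exact ⟨y, S.omega_subset_omegaF _ hy⟩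

/-- Without this the set in the infimum defining `eta3` could be empty, where `sInf` is `0`. -/
lemma exists_forall_gt_infDist_omegaF_lt (x : X) {ε : ℝ} (hε : 0 < ε) :
    ∃ t, 0 ≤ t ∧ ∀ t' > t, infDist (S.f t' x) S.omegaF < ε := by
  by_contra! hfar
  choose u hu hεu using fun n : ℕ => hfar n n.cast_nonneg
  have hn_le : ∀ n : ℕ, (n : ℝ) ≤ u n := fun n => (hu n).le
  obtain ⟨y, hy, φ, -, hφy⟩ := S.exists_mem_omega_tendsto_subseq x
    (fun n => n.cast_nonneg.trans (hn_le n)) (tendsto_atTop_mono hn_le tendsto_natCast_atTop_atTop)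
  have hlim : Tendsto (fun n => infDist (S.f (u (φ n)) x) S.omegaF) atTop (𝓝 0) := by
    have := ((continuous_infDist_pt S.omegaF).tendsto y).comp hφy
    rwa [infDist_zero_of_mem (S.omega_subset_omegaF x hy)] at this
  exact hε.not_ge (ge_of_tendsto hlim (Eventually.of_forall fun n => hεu (φ n)))

lemma le_eta3 (x : X) {t ε : ℝ} (hε : 0 < ε) (ht : ε ≤ infDist (S.f t x) S.omegaF) :
    t ≤ S.eta3 x ε := by
  obtain ⟨s, hs0, hs⟩ := S.exists_forall_gt_infDist_omegaF_lt x hε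
  exact le_csInf ⟨s, hs0, hs⟩ fun s' hs' => not_lt.1 fun hlt => (hs'.2 t hlt).not_ge ht

lemma exists_forall_Icc_dist_lt (T : ℝ) {ε : ℝ} (hε : 0 < ε) :
    ∃ δ > 0, ∀ x y : X, dist x y < δ → ∀ t ∈ Icc 0 T, dist (S.f t x) (S.f t y) < ε := by
  have hUC := (isCompact_Icc.prod isCompact_univ).uniformContinuousOn_of_continuous
    (S.cont.mono fun p hp => hp.1.1 : ContinuousOn _ (Icc 0 T ×ˢ (univ : Set X)))
  obtain ⟨δ, hδ, hδUC⟩ := Metric.uniformContinuousOn_iff.1 hUC ε hε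
  refine ⟨δ, hδ, fun x y hxy t ht => hδUC (t, x) ⟨ht, trivial⟩ (t, y) ⟨ht, trivial⟩ ?_⟩
  simpa [Prod.dist_eq, hδ] using hxy

lemma IsInvariantSet.exists_forall_Icc_infDist_lt {S : Semiflow X} {W : Set X}
    (hW : S.IsInvariantSet W) (T : ℝ) {ε : ℝ} (hε : 0 < ε) :
    ∃ δ > 0, ∀ x, infDist x W < δ → ∀ t ∈ Icc 0 T, infDist (S.f t x) W < ε := by
  obtain ⟨δ, hδ, hdist⟩ := S.exists_forall_Icc_dist_lt T hε
  refine ⟨δ, hδ, fun x hx t ht => ?_⟩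
  rcases W.eq_empty_or_nonempty with rfl | hWne
  · simpa using hε
  obtain ⟨w, hw, hxw⟩ := (infDist_lt_iff hWne).1 hx
  exact (infDist_le_dist_of_mem (hW.mapsTo ht.1 hw)).trans_lt (hdist x w hxw t ht)

lemma IsInvariantSet.exists_gt_infDist_eq_of_not_lyapunovStable {S : Semiflow X}
    {W : Set X} (hW : S.IsInvariantSet W) (hunst : ¬ S.LyapunovStable W) :
    ∃ r > 0, ∀ c ∈ Ioc 0 r, ∀ T ≥ 0, ∃ x, ∃ t > T, infDist (S.f t x) W = c := by
  unfold LyapunovStable at hunst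
  push Not at hunst
  obtain ⟨r, hr, hleave⟩ := hunst
  refine ⟨r, hr, fun c ⟨hc, hcr⟩ T hT => ?_⟩
  obtain ⟨δ, hδ, hnear⟩ := hW.exists_forall_Icc_infDist_lt T hc
  obtain ⟨x, hx, τ, hτ, hxτ⟩ := hleave δ hδ
  have hnearT := hnear x hx T ⟨hT, le_rfl⟩
  have hTτ : T ≤ τ := le_of_not_ge fun hτT => (hnear x hx τ ⟨hτ, hτT⟩).not_ge (hcr.trans hxτ)
  have hg : ContinuousOn (fun t => infDist (S.f t x) W) (Icc T τ) :=
    (continuous_infDist_pt W).comp_continuousOn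
      ((S.continuousOn_orbit x).mono fun _ ht => hT.trans ht.1)
  obtain ⟨t, ht, hxt⟩ := intermediate_value_Ioc hTτ hg ⟨hnearT, hcr.trans hxτ⟩
  exact ⟨x, t, ht.1, hxt⟩

end Compact

end Semiflow

/-- Theorem 3.2: if there exists a closed invariant isolated and not Lyapunov stable
set `W ⊆ X`, then the semiflow possesses η₃-slow relaxations. -/
theorem isolated_unstable_slowEta3 {X : Type*} [MetricSpace X] [CompactSpace X]
    (S : Semiflow X)
    (h : ∃ W : Set X, IsClosed W ∧ S.IsInvariantSet W ∧
      (∃ lam > (0:ℝ), ∀ y ∈ S.omegaF, infDist y W < lam → y ∈ W) ∧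
      ¬ S.LyapunovStable W) :
    S.SlowEta3 := by
  obtain ⟨W, -, hWinv, ⟨lam, hlam, hiso⟩, hunst⟩ := h
  obtain ⟨r, hr, hlate⟩ := hWinv.exists_gt_infDist_eq_of_not_lyapunovStable hunst
  obtain ⟨ε, hε, hεr, hεlam⟩ : ∃ ε > 0, 2 * ε ≤ r ∧ 3 * ε ≤ lam :=
    ⟨min r lam / 3, by positivity, by linarith [min_le_left r lam],
      by linarith [min_le_right r lam]⟩
  refine ⟨ε, hε, fun T hT => ?_⟩
  obtain ⟨x, t, hTt, hxt⟩ := hlate (2 * ε) ⟨by positivity, hεr⟩ T hT.le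
  have : Nonempty X := ⟨x⟩
  have hfar : ε ≤ infDist (S.f t x) S.omegaF :=
    le_infDist_of_forall_infDist_lt_imp_mem S.omegaF_nonempty hiso (by linarith) (by linarith)
  exact ⟨x, hTt.trans_le (S.le_eta3 x hε hfar)⟩
end

section
/- For a single semiflow f on a compact metric space X, η₁⁰- and η₂⁰-slow relaxations are impossible: there do not exist γ > 0, sequences of numbers εⱼ > 0 with εⱼ → 0, points xⱼ ∈ X, and (xⱼ,εⱼ)-motions φⱼ such that η₁^{εⱼ}(φⱼ,γ) → ∞, and likewise none with η₂^{εⱼ}(φⱼ,γ) → ∞, where for an (x,ε)-motion φ one sets η₁^ε(φ,γ) = inf{t ≥ 0 : dist(φ(t), ω^ε_f) < γ} and η₂^ε(φ,γ) = outer Lebesgue measure of {t ≥ 0 : dist(φ(t), ω^ε_f) ≥ γ}. -/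
open Filter Topology Metric Set MeasureTheory
open scoped ENNReal

namespace Semiflow

variable {X : Type*} [MetricSpace X] (S : Semiflow X)

/-- An `(x,ε)`-motion (with time scale `T`): a perturbed motion which on every
interval of length `T` departs from the true motion by less than `ε`. -/
def IsEpsMotion (T ε : ℝ) (x : X) (φ : ℝ → X) : Prop :=
  φ 0 = x ∧ ∀ t : ℝ, 0 ≤ t → ∀ τ ∈ Icc (0:ℝ) T, dist (φ (t + τ)) (S.f τ (φ t)) < ε

/-- `ω^ε(x)`: ω-limit points of all `(x,ε)`-motions. -/
def omegaEps (T ε : ℝ) (x : X) : Set X :=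
  {y | ∃ φ : ℝ → X, S.IsEpsMotion T ε x φ ∧
      ∃ t : ℕ → ℝ, (∀ n, 0 ≤ t n) ∧ Tendsto t atTop atTop ∧
        Tendsto (fun n => φ (t n)) atTop (𝓝 y)}

/-- `ω^ε_f = ⋃ₓ ω^ε(x)`. -/
def omegaEpsF (T ε : ℝ) : Set X := ⋃ x : X, S.omegaEps T ε x

/-- `ω⁰(x) = ⋂_{ε>0} ω^ε(x)`. -/
def omegaZero (T : ℝ) (x : X) : Set X := ⋂ ε > (0:ℝ), S.omegaEps T ε x

/-- `ω⁰_f = ⋃ₓ ω⁰(x)`. -/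
def omegaZeroF (T : ℝ) : Set X := ⋃ x : X, S.omegaZero T x

/-- `η₁^ε(φ,γ)`: time of first entry of the `ε`-motion `φ` into the
`γ`-neighbourhood of `ω^ε_f`. -/
noncomputable def eta1Eps (T ε : ℝ) (φ : ℝ → X) (γ : ℝ) : ℝ :=
  sInf {t : ℝ | 0 ≤ t ∧ infDist (φ t) (S.omegaEpsF T ε) < γ}

/-- `η₂^ε(φ,γ)`: outer Lebesgue measure of the set of times the `ε`-motion `φ`
spends outside the `γ`-neighbourhood of `ω^ε_f`. -/
noncomputable def eta2Eps (T ε : ℝ) (φ : ℝ → X) (γ : ℝ) : ℝ≥0∞ :=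
  volume {t : ℝ | 0 ≤ t ∧ γ ≤ infDist (φ t) (S.omegaEpsF T ε)}

end Semiflow


/-!
Were `η₂` unbounded along `εⱼ → 0`, the long time an `εⱼ`-motion spends `γ`-far from `ω^{εⱼ}_f`
would, by pigeonholing its positions over a finite `r`-net, contain two times at least `T` apart
with positions `r`-close: a far point from which an `εⱼ`-motion returns `r`-close. With `r` and
`εⱼ` tending to `0` these far points accumulate at some `z`. Fix one of them, `y`, within `γ/2` of
`z`, with tolerance `ε`. A much finer motion returning much better from a point `y'` near `z` can
be repeated periodically into an `ε`-motion, so `y' ∈ ω^ε(y')`, although `dist y y' < γ`.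
Finally `η₁ ≤ η₂`, since every time before `η₁` is a far time.
-/

theorem Real.exists_add_le_of_ofReal_lt_volume {E : Set ℝ} {T : ℝ}
    (h : ENNReal.ofReal T < volume E) : ∃ t ∈ E, ∃ t' ∈ E, t + T ≤ t' := by
  by_contra! hE
  refine h.not_ge ((Real.volume_le_diam E).trans (ediam_le fun t ht t' ht' => ?_))
  rw [edist_dist, Real.dist_eq]
  exact ENNReal.ofReal_le_ofReal
    (abs_sub_le_iff.2 ⟨by linarith [hE t' ht' t ht], by linarith [hE t ht t' ht']⟩)

theorem CompactSpace.exists_return_of_ofReal_lt_volume {X : Type*} [MetricSpace X]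
    [CompactSpace X] {r : ℝ} (hr : 0 < r) (T : ℝ) :
    ∃ M : ℝ, ∀ (φ : ℝ → X) (E : Set ℝ), ENNReal.ofReal M < volume E →
      ∃ t ∈ E, ∃ t' ∈ E, t + T ≤ t' ∧ dist (φ t') (φ t) < r := by
  obtain ⟨C, -, hC, hcover⟩ :=
    finite_cover_balls_of_compact (isCompact_univ (X := X)) (half_pos hr)
  refine ⟨hC.toFinset.card * T, fun φ E hE => ?_⟩
  obtain ⟨c, -, hc⟩ :
      ∃ c ∈ hC.toFinset, ENNReal.ofReal T < volume (E ∩ φ ⁻¹' ball c (r / 2)) := by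
    by_contra! hsmall
    have hsub : E ⊆ ⋃ c ∈ hC.toFinset, E ∩ φ ⁻¹' ball c (r / 2) := fun t ht => by
      obtain ⟨c, hc, hφt⟩ := mem_iUnion₂.1 (hcover (mem_univ (φ t)))
      exact mem_iUnion₂.2 ⟨c, hC.mem_toFinset.2 hc, ht, hφt⟩
    refine hE.not_ge ?_
    calc volume E ≤ ∑ c ∈ hC.toFinset, volume (E ∩ φ ⁻¹' ball c (r / 2)) :=
          (measure_mono hsub).trans (measure_biUnion_finset_le _ _)
      _ ≤ ∑ _c ∈ hC.toFinset, ENNReal.ofReal T := Finset.sum_le_sum hsmall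
      _ = ENNReal.ofReal (hC.toFinset.card * T) := by
          rw [Finset.sum_const, nsmul_eq_mul, ENNReal.ofReal_mul (Nat.cast_nonneg _),
            ENNReal.ofReal_natCast]
  obtain ⟨t, ⟨htE, htc⟩, t', ⟨ht'E, ht'c⟩, hle⟩ := Real.exists_add_le_of_ofReal_lt_volume hc
  refine ⟨t, htE, t', ht'E, hle, ?_⟩
  calc dist (φ t') (φ t) ≤ dist (φ t') c + dist (φ t) c := dist_triangle_right _ _ _
    _ < r / 2 + r / 2 := add_lt_add (mem_ball.1 ht'c) (mem_ball.1 htc)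
    _ = r := add_halves r

noncomputable def periodize {X : Type*} {s : ℝ} (hs : 0 < s) (χ : ℝ → X) (t : ℝ) : X :=
  χ (toIcoMod hs 0 t)

theorem periodize_eq {X : Type*} {s : ℝ} (hs : 0 < s) (χ : ℝ → X) {t u : ℝ}
    (hu : u ∈ Ico 0 s) (k : ℤ) (ht : t = u + k * s) : periodize hs χ t = χ u := by
  rw [periodize, (toIcoMod_eq_iff hs).2 ⟨by rwa [zero_add], k, by rw [ht, zsmul_eq_mul]⟩]

namespace Semiflow

variable {X : Type*} [MetricSpace X]

theorem IsEpsMotion.mono {S : Semiflow X} {T ε ε' : ℝ} {x : X} {φ : ℝ → X}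
    (h : S.IsEpsMotion T ε x φ) (hε : ε ≤ ε') : S.IsEpsMotion T ε' x φ :=
  ⟨h.1, fun t ht τ hτ => (h.2 t ht τ hτ).trans_le hε⟩

theorem IsEpsMotion.shift {S : Semiflow X} {T ε : ℝ} {x : X} {φ : ℝ → X}
    (h : S.IsEpsMotion T ε x φ) {a : ℝ} (ha : 0 ≤ a) :
    S.IsEpsMotion T ε (φ a) (fun t => φ (a + t)) :=
  ⟨by simp only [add_zero], fun t ht τ hτ => by
    simpa only [add_assoc] using h.2 (a + t) (add_nonneg ha ht) τ hτ⟩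

variable (S : Semiflow X)

theorem ofReal_eta1Eps_le_eta2Eps (T ε : ℝ) (φ : ℝ → X) (γ : ℝ) :
    ENNReal.ofReal (S.eta1Eps T ε φ γ) ≤ S.eta2Eps T ε φ γ := by
  rw [← sub_zero (S.eta1Eps T ε φ γ), ← Real.volume_Ico]
  refine measure_mono fun t ⟨ht0, ht⟩ => ⟨ht0, not_lt.1 fun hnear => ht.not_ge ?_⟩
  exact csInf_le ⟨0, fun _ h => h.1⟩ ⟨ht0, hnear⟩

variable [CompactSpace X]

theorem uniformEquicontinuous_f (T : ℝ) :
    UniformEquicontinuous fun τ : Icc (0:ℝ) T => S.f τ := by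
  have hK : IsCompact (Icc (0:ℝ) T ×ˢ (univ : Set X)) := isCompact_Icc.prod isCompact_univ
  have huc := hK.uniformContinuousOn_of_continuous (S.cont.mono fun p hp => hp.1.1)
  rw [Metric.uniformContinuousOn_iff] at huc
  rw [Metric.uniformEquicontinuous_iff]
  intro ε hε
  obtain ⟨δ, hδ, h⟩ := huc ε hε
  exact ⟨δ, hδ, fun x y hxy τ =>
    h (τ, x) ⟨τ.2, trivial⟩ (τ, y) ⟨τ.2, trivial⟩ (by simpa [Prod.dist_eq] using hxy)⟩

/-- Since `T ≤ s`, a time window of length `T` crosses at most one seam of the periodic motion,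
and crossing it costs one application of the equicontinuity of the time-`τ` maps. -/
theorem exists_isEpsMotion_periodize (T : ℝ) {ε : ℝ} (hε : 0 < ε) :
    ∃ β > 0, ∀ (χ : ℝ → X) {s : ℝ} (hs : 0 < s), T ≤ s → S.IsEpsMotion T β (χ 0) χ →
      dist (χ s) (χ 0) < β → S.IsEpsMotion T ε (χ 0) (periodize hs χ) := by
  obtain ⟨β₁, hβ₁, huc⟩ :=
    Metric.uniformEquicontinuous_iff.1 (S.uniformEquicontinuous_f T) (ε / 2) (half_pos hε)
  refine ⟨min (ε / 2) (β₁ / 2), lt_min (half_pos hε) (half_pos hβ₁),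
    fun χ s hs hTs hχ hret => ⟨periodize_eq hs χ ⟨le_rfl, hs⟩ 0 (by simp), fun t _ τ hτ => ?_⟩⟩
  have hβε : min (ε / 2) (β₁ / 2) ≤ ε / 2 := min_le_left _ _
  have hββ₁ : min (ε / 2) (β₁ / 2) ≤ β₁ / 2 := min_le_right _ _
  set u := toIcoMod hs 0 t
  obtain ⟨hu0, hus⟩ : u ∈ Ico 0 s := toIcoMod_mem_Ico' hs t
  set k := toIcoDiv hs 0 t
  have ht : t = u + k * s := by rw [← zsmul_eq_mul, toIcoMod_add_toIcoDiv_zsmul]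
  rw [periodize_eq hs χ ⟨hu0, hus⟩ k ht]
  by_cases hseam : u + τ < s
  · rw [periodize_eq hs χ ⟨by linarith [hτ.1], hseam⟩ k (by rw [ht]; ring)]
    linarith [hχ.2 u hu0 τ hτ]
  · push Not at hseam
    set v := u + τ - s with hv_def
    have hv : v ∈ Icc (0:ℝ) T := ⟨by linarith, by linarith [hτ.2]⟩
    have hw : s - u ∈ Icc (0:ℝ) T := ⟨by linarith, by linarith [hτ.2]⟩
    rw [periodize_eq hs χ ⟨hv.1, by linarith [hτ.2]⟩ (k + 1) (by rw [ht]; push_cast; ring)]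
    have hsplit : S.f τ (χ u) = S.f v (S.f (s - u) (χ u)) := by
      rw [S.semigroup v (s - u) hv.1 hw.1, hv_def]; ring_nf
    have hseam_near : dist (S.f (s - u) (χ u)) (χ 0) < β₁ := by
      have := hχ.2 u hu0 (s - u) hw
      rw [add_sub_cancel] at this
      linarith [dist_triangle_left (S.f (s - u) (χ u)) (χ 0) (χ s)]
    have hflow := huc _ _ hseam_near ⟨v, hv⟩
    have hrestart := hχ.2 0 le_rfl v hv
    rw [zero_add] at hrestart
    rw [hsplit]
    linarith [dist_triangle (χ v) (S.f v (χ 0)) (S.f v (S.f (s - u) (χ u))),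
      dist_comm (S.f v (χ 0)) (S.f v (S.f (s - u) (χ u)))]

theorem exists_mem_omegaEps_of_return {T : ℝ} {ε : ℝ} (hε : 0 < ε) :
    ∃ β > 0, ∀ (χ : ℝ → X) {s : ℝ}, 0 < s → T ≤ s → S.IsEpsMotion T β (χ 0) χ →
      dist (χ s) (χ 0) < β → χ 0 ∈ S.omegaEps T ε (χ 0) := by
  obtain ⟨β, hβ, hper⟩ := S.exists_isEpsMotion_periodize T hε
  refine ⟨β, hβ, fun χ s hs hTs hχ hret => ⟨periodize hs χ, hper χ hs hTs hχ hret,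
    fun n => n * s, fun n => by positivity, tendsto_natCast_atTop_atTop.atTop_mul_const hs, ?_⟩⟩
  have hconst : (fun n : ℕ => periodize hs χ (n * s)) = fun _ => χ 0 :=
    funext fun n => periodize_eq hs χ ⟨le_rfl, hs⟩ n (by simp)
  exact hconst ▸ tendsto_const_nhds

theorem exists_far_return {T γ : ℝ}
    (H : ∀ δ > 0, ∀ M : ℝ, ∃ ε x φ, 0 < ε ∧ ε ≤ δ ∧ S.IsEpsMotion T ε x φ ∧
      ENNReal.ofReal M < S.eta2Eps T ε φ γ) (η : ℝ) (hη : 0 < η) :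
    ∃ ε χ, 0 < ε ∧ ε ≤ η ∧ S.IsEpsMotion T ε (χ 0) χ ∧
      γ ≤ infDist (χ 0) (S.omegaEpsF T ε) ∧ ∃ s, T ≤ s ∧ dist (χ s) (χ 0) < η := by
  obtain ⟨M, hM⟩ := CompactSpace.exists_return_of_ofReal_lt_volume (X := X) hη T
  obtain ⟨ε, x, φ, hε, hεη, hφ, hfar⟩ := H η hη M
  obtain ⟨t, ⟨ht0, htfar⟩, t', -, htt', hret⟩ := hM φ _ hfar
  refine ⟨ε, fun u => φ (t + u), hε, hεη, by simpa using hφ.shift ht0, by simpa using htfar,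
    t' - t, by linarith, by simpa using hret⟩

theorem false_of_far_returns {T γ : ℝ} (hT : 0 < T) (hγ : 0 < γ)
    (R : ∀ η > 0, ∃ ε χ, 0 < ε ∧ ε ≤ η ∧ S.IsEpsMotion T ε (χ 0) χ ∧
      γ ≤ infDist (χ 0) (S.omegaEpsF T ε) ∧ ∃ s, T ≤ s ∧ dist (χ s) (χ 0) < η) : False := by
  choose ε χ hε hεη hχ hfar s hTs hret using
    fun i : ℕ => R (1 / (i + 1)) Nat.one_div_pos_of_nat
  obtain ⟨z, g, hg, hgz⟩ := CompactSpace.tendsto_subseq fun i => χ i 0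
  have hnear : ∀ᶠ k in atTop, dist (χ (g k) 0) z < γ / 2 :=
    (tendsto_iff_dist_tendsto_zero.1 hgz).eventually_lt_const (half_pos hγ)
  obtain ⟨k₀, hk₀⟩ := hnear.exists
  obtain ⟨β, hβ, hclose⟩ := S.exists_mem_omegaEps_of_return (T := T) (hε (g k₀))
  have hfine : ∀ᶠ k in atTop, 1 / ((g k : ℝ) + 1) < β :=
    (tendsto_one_div_add_atTop_nhds_zero_nat.comp hg.tendsto_atTop).eventually_lt_const hβ
  obtain ⟨k, hk, hkβ⟩ := (hnear.and hfine).exists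
  have hmem : χ (g k) 0 ∈ S.omegaEpsF T (ε (g k₀)) :=
    mem_iUnion.2 ⟨_, hclose (χ (g k)) (hT.trans_le (hTs _)) (hTs _)
      ((hχ _).mono ((hεη _).trans hkβ.le)) ((hret _).trans hkβ)⟩
  have := (hfar (g k₀)).trans (infDist_le_dist_of_mem hmem)
  linarith [dist_triangle_right (χ (g k₀) 0) (χ (g k) 0) z]

theorem exists_eta2Eps_le {T γ : ℝ} (hT : 0 < T) (hγ : 0 < γ) :
    ∃ δ > 0, ∃ M : ℝ, ∀ ε x φ, 0 < ε → ε ≤ δ → S.IsEpsMotion T ε x φ →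
      S.eta2Eps T ε φ γ ≤ ENNReal.ofReal M := by
  by_contra! H
  exact S.false_of_far_returns hT hγ (S.exists_far_return H)

theorem exists_eta1Eps_le {T γ : ℝ} (hT : 0 < T) (hγ : 0 < γ) :
    ∃ δ > 0, ∃ M : ℝ, ∀ ε x φ, 0 < ε → ε ≤ δ → S.IsEpsMotion T ε x φ →
      S.eta1Eps T ε φ γ ≤ M := by
  obtain ⟨δ, hδ, M, hM⟩ := S.exists_eta2Eps_le hT hγ
  refine ⟨δ, hδ, max M 0, fun ε x φ hε hεδ hφ =>
    (ENNReal.ofReal_le_ofReal_iff (le_max_right M 0)).1 ?_⟩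
  exact (S.ofReal_eta1Eps_le_eta2Eps T ε φ γ).trans
    ((hM ε x φ hε hεδ hφ).trans (ENNReal.ofReal_le_ofReal (le_max_left M 0)))

end Semiflow

/-- Theorem 4.5: η₁⁰- and η₂⁰-slow relaxations are impossible for one semiflow. -/
theorem no_eta1Zero_eta2Zero_slow {X : Type*} [MetricSpace X] [CompactSpace X]
    (S : Semiflow X) (T : ℝ) (hT : 0 < T) :
    (¬ ∃ γ > (0:ℝ), ∃ (ε : ℕ → ℝ) (xs : ℕ → X) (φ : ℕ → ℝ → X),
        (∀ j, 0 < ε j) ∧ Tendsto ε atTop (𝓝 0) ∧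
        (∀ j, S.IsEpsMotion T (ε j) (xs j) (φ j)) ∧
        Tendsto (fun j => S.eta1Eps T (ε j) (φ j) γ) atTop atTop) ∧
    (¬ ∃ γ > (0:ℝ), ∃ (ε : ℕ → ℝ) (xs : ℕ → X) (φ : ℕ → ℝ → X),
        (∀ j, 0 < ε j) ∧ Tendsto ε atTop (𝓝 0) ∧
        (∀ j, S.IsEpsMotion T (ε j) (xs j) (φ j)) ∧
        Tendsto (fun j => S.eta2Eps T (ε j) (φ j) γ) atTop (𝓝 ⊤)) := by
  constructor
  · rintro ⟨γ, hγ, ε, xs, φ, hε, hε0, hφ, hslow⟩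
    obtain ⟨δ, hδ, M, hM⟩ := S.exists_eta1Eps_le hT hγ
    obtain ⟨j, hjδ, hjM⟩ :=
      ((hε0.eventually_lt_const hδ).and (hslow.eventually_gt_atTop M)).exists
    exact hjM.not_ge (hM _ _ _ (hε j) hjδ.le (hφ j))
  · rintro ⟨γ, hγ, ε, xs, φ, hε, hε0, hφ, hslow⟩
    obtain ⟨δ, hδ, M, hM⟩ := S.exists_eta2Eps_le hT hγ
    obtain ⟨j, hjδ, hjM⟩ := ((hε0.eventually_lt_const hδ).and
      (hslow.eventually_const_lt ENNReal.ofReal_lt_top)).exists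
    exact hjM.not_ge (hM _ _ _ (hε j) hjδ.le (hφ j))
end

section
/- For every x ∈ X and k ∈ K, the set ω⁰(x,k) is closed in X and is invariant: for every y ∈ ω⁰(x,k) there is a map φ : ℝ → X with φ(0) = y, f(t, φ(s), k) = φ(s+t) for all s ∈ ℝ and t ≥ 0, and φ(ℝ) ⊆ ω⁰(x,k). -/
open Filter Topology Metric Set MeasureTheory
open scoped ENNReal

namespace PSemiflow

variable {X K : Type*} [MetricSpace X] [MetricSpace K] (S : PSemiflow X K)

/-- A `(k,x,ε)`-motion (with time scale `T`): a perturbed motion which on every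
interval of length `T` departs from the true motion by less than `ε`. -/
def IsEpsMotion (T ε : ℝ) (k : K) (x : X) (φ : ℝ → X) : Prop :=
  φ 0 = x ∧ ∀ t : ℝ, 0 ≤ t → ∀ τ ∈ Icc (0:ℝ) T, dist (φ (t + τ)) (S.f τ (φ t) k) < ε

/-- `ω^ε(x,k)`: ω-limit points of all `(k,x,ε)`-motions. -/
def omegaEps (T ε : ℝ) (x : X) (k : K) : Set X :=
  {y | ∃ φ : ℝ → X, S.IsEpsMotion T ε k x φ ∧
      ∃ t : ℕ → ℝ, (∀ n, 0 ≤ t n) ∧ Tendsto t atTop atTop ∧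
        Tendsto (fun n => φ (t n)) atTop (𝓝 y)}

/-- `ω⁰(x,k) = ⋂_{ε>0} ω^ε(x,k)`. -/
def omegaZero (T : ℝ) (x : X) (k : K) : Set X := ⋂ ε > (0:ℝ), S.omegaEps T ε x k

end PSemiflow

/-!
Motions need not be continuous, so an `ε/2`-motion can be redirected, at the times where it
approaches one of its limit points `w`, through any point `y` close to `w`; by uniform
continuity of the flow on `[0,T] × X` the result is still an `ε`-motion. Hence a point that is
`ε`-close to `ω^ε(x,k)` for every `ε > 0` lies in `ω⁰(x,k)`. Closedness follows, and so does
`f(τ, ω⁰) ⊆ ω⁰` for `τ ∈ [0,T]`: along an `ε`-motion, limits of `φ(tₙ + τ)` are `ε`-close to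
`f(τ, lim φ(tₙ))`. Reading the same estimate backwards and using compactness, `f(T,·)` maps
`ω⁰` onto itself, so `ω⁰` carries a backward orbit of `f(T,·)`, which the semigroup law
extends to an entire orbit.
-/

open Function

namespace PSemiflow

variable {X K : Type*} [MetricSpace X] [MetricSpace K] (S : PSemiflow X K)
  {T ε : ℝ} {x : X} {k : K}

lemma continuous_flow {τ : ℝ} (hτ : 0 ≤ τ) (k : K) : Continuous fun x : X => S.f τ x k :=
  S.cont.comp_continuous (continuous_const.prodMk (continuous_id.prodMk continuous_const))
    fun _ => hτ

lemma uniformEquicontinuous_flow_Icc [CompactSpace X] (T : ℝ) (k : K) :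
    UniformEquicontinuous fun τ : Icc (0 : ℝ) T => fun x : X => S.f τ x k := by
  have hcont : ContinuousOn (fun p : ℝ × X => S.f p.1 p.2 k) (Icc 0 T ×ˢ univ) :=
    S.cont.comp (by fun_prop : Continuous fun p : ℝ × X => (p.1, p.2, k)).continuousOn
      fun p hp => hp.1.1
  have hunif := (isCompact_Icc.prod isCompact_univ).uniformContinuousOn_of_continuous hcont
  rw [Metric.uniformContinuousOn_iff] at hunif
  rw [Metric.uniformEquicontinuous_iff]
  intro ε hε
  obtain ⟨δ, hδ, H⟩ := hunif ε hε
  refine ⟨δ, hδ, fun x₁ x₂ h τ => H (τ, x₁) ⟨τ.2, trivial⟩ (τ, x₂) ⟨τ.2, trivial⟩ ?_⟩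
  simpa [Prod.dist_eq] using h

variable {S} in
lemma IsEpsMotion.mono {ε₁ ε₂ : ℝ} {φ : ℝ → X} (hφ : S.IsEpsMotion T ε₁ k x φ) (h : ε₁ ≤ ε₂) :
    S.IsEpsMotion T ε₂ k x φ :=
  ⟨hφ.1, fun s hs τ hτ => (hφ.2 s hs τ hτ).trans_le h⟩

lemma omegaEps_mono {ε₁ ε₂ : ℝ} (h : ε₁ ≤ ε₂) : S.omegaEps T ε₁ x k ⊆ S.omegaEps T ε₂ x k :=
  fun _ ⟨φ, hφ, ht⟩ => ⟨φ, hφ.mono h, ht⟩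

lemma mem_omegaEps_of_tendsto {φ : ℝ → X} (hφ : S.IsEpsMotion T ε k x φ) {s : ℕ → ℝ}
    (hs : Tendsto s atTop atTop) {y : X} (hy : Tendsto (fun n => φ (s n)) atTop (𝓝 y)) :
    y ∈ S.omegaEps T ε x k := by
  obtain ⟨N, hN⟩ := eventually_atTop.mp (hs.eventually_ge_atTop 0)
  exact ⟨φ, hφ, fun n => s (n + N), fun n => hN _ (Nat.le_add_left _ _),
    hs.comp (tendsto_add_atTop_nat N), hy.comp (tendsto_add_atTop_nat N)⟩

lemma dist_flow_le_of_isEpsMotion {φ : ℝ → X} (hφ : S.IsEpsMotion T ε k x φ) {s : ℕ → ℝ}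
    (hs : Tendsto s atTop atTop) {τ : ℝ} (hτ : τ ∈ Icc 0 T) {p q : X}
    (hp : Tendsto (fun n => φ (s n)) atTop (𝓝 p))
    (hq : Tendsto (fun n => φ (s n + τ)) atTop (𝓝 q)) :
    dist q (S.f τ p k) ≤ ε :=
  le_of_tendsto (hq.dist (((S.continuous_flow hτ.1 k).tendsto p).comp hp)) <|
    (hs.eventually_ge_atTop 0).mono fun n hn => (hφ.2 (s n) hn τ hτ).le

lemma isEpsMotion_of_forall_dist_lt {ε₁ δ η : ℝ} {φ ψ : ℝ → X}
    (hφ : S.IsEpsMotion T ε₁ k x φ) (hψ0 : ψ 0 = x) (hψφ : ∀ s, dist (ψ s) (φ s) < δ)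
    (hf : ∀ s, ∀ τ ∈ Icc 0 T, dist (S.f τ (φ s) k) (S.f τ (ψ s) k) < η) :
    S.IsEpsMotion T (δ + ε₁ + η) k x ψ :=
  ⟨hψ0, fun s hs τ hτ => calc
    dist (ψ (s + τ)) (S.f τ (ψ s) k)
      ≤ dist (ψ (s + τ)) (φ (s + τ)) + dist (φ (s + τ)) (S.f τ (φ s) k)
          + dist (S.f τ (φ s) k) (S.f τ (ψ s) k) := dist_triangle4 _ _ _ _
    _ < δ + ε₁ + η := add_lt_add (add_lt_add (hψφ _) (hφ.2 s hs τ hτ)) (hf s τ hτ)⟩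

lemma exists_thickening_omegaEps_subset [CompactSpace X] (hε : 0 < ε) :
    ∃ δ > 0, thickening δ (S.omegaEps T (ε / 2) x k) ⊆ S.omegaEps T ε x k := by
  classical
  obtain ⟨δ₀, hδ₀, hU⟩ :=
    Metric.uniformEquicontinuous_iff.mp (S.uniformEquicontinuous_flow_Icc T k) (ε / 4)
      (by positivity)
  set δ := min δ₀ (ε / 4)
  refine ⟨δ, by positivity, fun y hy => ?_⟩
  obtain ⟨w, ⟨φ, hφ, t, -, htop, hconv⟩, hyw⟩ := mem_thickening_iff.mp hy
  obtain ⟨N, hN⟩ := eventually_atTop.mp <|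
    (hconv.eventually (ball_mem_nhds w (sub_pos.2 hyw))).and (htop.eventually_gt_atTop 0)
  set A := t '' Ici N
  set ψ : ℝ → X := A.piecewise (fun _ => y) φ
  have hψA : ∀ n ≥ N, ψ (t n) = y := fun n hn => piecewise_eq_of_mem _ _ _ ⟨n, hn, rfl⟩
  have hψ0 : ψ 0 = x := by
    refine (piecewise_eq_of_notMem _ _ _ ?_).trans hφ.1
    rintro ⟨n, hn, h0⟩
    exact (hN n hn).2.ne' h0
  have hψφ : ∀ s, dist (ψ s) (φ s) < δ := by
    intro s
    by_cases hs : s ∈ A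
    · obtain ⟨n, hn, rfl⟩ := hs
      rw [hψA n hn]
      calc dist y (φ (t n)) ≤ dist y w + dist (φ (t n)) w := dist_triangle_right _ _ _
        _ < δ := by linarith [mem_ball.1 (hN n hn).1]
    · rw [show ψ s = φ s from piecewise_eq_of_notMem _ _ _ hs, dist_self]
      positivity
  have hψ : S.IsEpsMotion T ε k x ψ :=
    (S.isEpsMotion_of_forall_dist_lt hφ hψ0 hψφ fun s τ hτ =>
      hU _ _ ((dist_comm _ _).trans_lt ((hψφ s).trans_le (min_le_left _ _))) ⟨τ, hτ⟩).mono
      (by linarith [min_le_right δ₀ (ε / 4)])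
  exact S.mem_omegaEps_of_tendsto hψ (htop.comp (tendsto_add_atTop_nat N))
    (tendsto_const_nhds.congr fun n => (hψA _ (Nat.le_add_left _ _)).symm)

lemma mem_omegaZero_of_forall_exists_dist_le [CompactSpace X] {y : X}
    (h : ∀ ε > 0, ∃ w ∈ S.omegaEps T ε x k, dist y w ≤ ε) : y ∈ S.omegaZero T x k := by
  refine mem_iInter₂.2 fun ε hε => ?_
  obtain ⟨δ, hδ, hsub⟩ := S.exists_thickening_omegaEps_subset hε
  obtain ⟨w, hw, hyw⟩ := h (min (δ / 2) (ε / 2)) (by positivity)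
  refine hsub (mem_thickening_iff.2 ⟨w, S.omegaEps_mono (min_le_right _ _) hw, ?_⟩)
  linarith [min_le_left (δ / 2) (ε / 2)]

lemma isClosed_omegaZero [CompactSpace X] : IsClosed (S.omegaZero T x k) :=
  isClosed_of_closure_subset fun _ hy => S.mem_omegaZero_of_forall_exists_dist_le fun ε hε =>
    let ⟨w, hw, hyw⟩ := Metric.mem_closure_iff.1 hy ε hε
    ⟨w, mem_iInter₂.1 hw ε hε, hyw.le⟩

lemma exists_mem_omegaEps_dist_flow_le [CompactSpace X] {τ : ℝ} (hτ : τ ∈ Icc 0 T) {z : X}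
    (hz : z ∈ S.omegaEps T ε x k) : ∃ w ∈ S.omegaEps T ε x k, dist w (S.f τ z k) ≤ ε := by
  obtain ⟨φ, hφ, t, -, htop, hconv⟩ := hz
  obtain ⟨w, σ, hσ, hw⟩ := CompactSpace.tendsto_subseq fun n => φ (t n + τ)
  have hs := htop.comp hσ.tendsto_atTop
  exact ⟨w, S.mem_omegaEps_of_tendsto hφ (tendsto_atTop_add_const_right _ τ hs) hw,
    S.dist_flow_le_of_isEpsMotion hφ hs hτ (hconv.comp hσ.tendsto_atTop) hw⟩

lemma exists_mem_omegaEps_dist_flow_period_le [CompactSpace X] (hT : 0 ≤ T) {y : X}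
    (hy : y ∈ S.omegaEps T ε x k) : ∃ w ∈ S.omegaEps T ε x k, dist y (S.f T w k) ≤ ε := by
  obtain ⟨φ, hφ, t, -, htop, hconv⟩ := hy
  obtain ⟨w, σ, hσ, hw⟩ := CompactSpace.tendsto_subseq fun n => φ (t n - T)
  have hs : Tendsto (fun n => t (σ n) - T) atTop atTop :=
    tendsto_atTop_add_const_right _ (-T) (htop.comp hσ.tendsto_atTop)
  refine ⟨w, S.mem_omegaEps_of_tendsto hφ hs hw,
    S.dist_flow_le_of_isEpsMotion hφ hs ⟨hT, le_rfl⟩ hw ?_⟩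
  simpa [comp_def] using hconv.comp hσ.tendsto_atTop

lemma flow_mem_omegaZero_of_mem_Icc [CompactSpace X] {τ : ℝ} (hτ : τ ∈ Icc 0 T) {z : X}
    (hz : z ∈ S.omegaZero T x k) : S.f τ z k ∈ S.omegaZero T x k :=
  S.mem_omegaZero_of_forall_exists_dist_le fun ε hε =>
    let ⟨w, hw, hwz⟩ := S.exists_mem_omegaEps_dist_flow_le hτ (mem_iInter₂.1 hz ε hε)
    ⟨w, hw, (dist_comm _ _).trans_le hwz⟩

lemma mapsTo_flow_omegaZero [CompactSpace X] (hT : 0 < T) {t : ℝ} (ht : 0 ≤ t) :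
    MapsTo (fun z => S.f t z k) (S.omegaZero T x k) (S.omegaZero T x k) := by
  obtain ⟨n, hn⟩ := exists_nat_ge (t / T)
  rw [div_le_iff₀ hT] at hn
  induction n generalizing t with
  | zero => exact fun z => S.flow_mem_omegaZero_of_mem_Icc ⟨ht, by simp at hn; linarith⟩
  | succ n ih =>
    rcases le_total t T with htT | hTt
    · exact fun z => S.flow_mem_omegaZero_of_mem_Icc ⟨ht, htT⟩
    · intro z hz
      have h := S.flow_mem_omegaZero_of_mem_Icc ⟨hT.le, le_rfl⟩
        (ih (sub_nonneg.2 hTt) (by push_cast at hn; linarith) hz)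
      rwa [S.semigroup _ _ hT.le (sub_nonneg.2 hTt), add_sub_cancel] at h

lemma surjOn_flow_omegaZero [CompactSpace X] (hT : 0 ≤ T) :
    SurjOn (fun z => S.f T z k) (S.omegaZero T x k) (S.omegaZero T x k) := by
  intro y hy
  have hpre (j : ℕ) : ∃ w ∈ S.omegaEps T (1 / (j + 1)) x k, dist y (S.f T w k) ≤ 1 / (j + 1) :=
    S.exists_mem_omegaEps_dist_flow_period_le hT (mem_iInter₂.1 hy _ Nat.one_div_pos_of_nat)
  choose w hw hyw using hpre
  obtain ⟨z, σ, hσ, hz⟩ := CompactSpace.tendsto_subseq w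
  have hε : Tendsto (fun j => 1 / ((σ j : ℝ) + 1)) atTop (𝓝 0) :=
    tendsto_one_div_add_atTop_nhds_zero_nat.comp hσ.tendsto_atTop
  refine ⟨z, S.mem_omegaZero_of_forall_exists_dist_le fun ε hε₀ => ?_, ?_⟩
  · obtain ⟨j, hjz, hjε⟩ :=
      ((hz.eventually (closedBall_mem_nhds z hε₀)).and (hε.eventually (ge_mem_nhds hε₀))).exists
    exact ⟨w (σ j), S.omegaEps_mono hjε (hw _), (dist_comm _ _).trans_le hjz⟩
  · refine tendsto_nhds_unique (((S.continuous_flow hT k).tendsto z).comp hz) ?_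
    exact tendsto_iff_dist_tendsto_zero.2 <| squeeze_zero (fun _ => dist_nonneg)
      (fun j => (dist_comm _ _).trans_le (hyw (σ j))) hε

lemma flow_mul_period_eq (hT : 0 ≤ T) {g : ℕ → X} (hg : ∀ m, S.f T (g (m + 1)) k = g m)
    (m j : ℕ) : S.f (j * T) (g (m + j)) k = g m := by
  induction j with
  | zero => simpa using S.map_zero (g m) k
  | succ j ih =>
    rw [← ih, ← hg (m + j), S.semigroup _ _ (by positivity) hT]
    push_cast
    ring_nf

lemma exists_entire_orbit_of_backward_orbit (hT : 0 < T) {g : ℕ → X}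
    (hg : ∀ m, S.f T (g (m + 1)) k = g m) :
    ∃ φ : ℝ → X, φ 0 = g 0 ∧ (∀ s t, 0 ≤ t → S.f t (φ s) k = φ (s + t)) ∧
      ∀ s, ∃ m : ℕ, ∃ t ≥ 0, φ s = S.f t (g m) k := by
  set M : ℝ → ℕ := fun s => ⌈-s / T⌉₊
  have hM (s : ℝ) : 0 ≤ s + M s * T := by
    have := (div_le_iff₀ hT).1 (Nat.le_ceil (-s / T))
    linarith
  have hM_anti {s t : ℝ} (ht : 0 ≤ t) : M (s + t) ≤ M s :=
    Nat.ceil_mono (div_le_div_of_nonneg_right (by linarith) hT.le)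
  refine ⟨fun s => S.f (s + M s * T) (g (M s)) k, by simp [M, S.map_zero],
    fun s t ht => ?_, fun s => ⟨M s, _, hM s, rfl⟩⟩
  obtain ⟨j, hj⟩ := Nat.exists_eq_add_of_le (hM_anti (s := s) ht)
  dsimp only
  rw [S.semigroup _ _ ht (hM s), hj, ← S.flow_mul_period_eq hT.le hg (M (s + t)) j,
    S.semigroup _ _ (hM (s + t)) (by positivity)]
  congr 1
  push_cast
  ring

end PSemiflow

theorem omegaZero_closed_invariant_general {X K : Type*} [MetricSpace X] [CompactSpace X]
    [MetricSpace K] (S : PSemiflow X K) (T : ℝ) (hT : 0 < T)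
    (x : X) (k : K) :
    IsClosed (S.omegaZero T x k) ∧
    ∀ y ∈ S.omegaZero T x k, ∃ φ : ℝ → X, φ 0 = y ∧
      (∀ s t : ℝ, 0 ≤ t → S.f t (φ s) k = φ (s + t)) ∧
      range φ ⊆ S.omegaZero T x k := by
  refine ⟨S.isClosed_omegaZero, fun y hy => ?_⟩
  have : Nonempty X := ⟨y⟩
  have hsurj : SurjOn (fun z => S.f T z k) (S.omegaZero T x k) (S.omegaZero T x k) :=
    S.surjOn_flow_omegaZero hT.le
  set G := invFunOn (fun z => S.f T z k) (S.omegaZero T x k)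
  have hG : MapsTo G (S.omegaZero T x k) (S.omegaZero T x k) := hsurj.mapsTo_invFunOn
  obtain ⟨φ, hφ0, hφ, hφg⟩ := S.exists_entire_orbit_of_backward_orbit hT (g := fun m => G^[m] y)
    fun m => by
      rw [iterate_succ_apply']
      exact hsurj.rightInvOn_invFunOn (hG.iterate m hy)
  refine ⟨φ, hφ0, hφ, ?_⟩
  rintro _ ⟨s, rfl⟩
  obtain ⟨m, t, ht, hs⟩ := hφg s
  exact hs ▸ S.mapsTo_flow_omegaZero hT ht (hG.iterate m hy)

/-- Proposition 4.8: for any `x ∈ X`, `k ∈ K` the set `ω⁰(x,k)` is closed and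
invariant. -/
theorem omegaZero_closed_invariant {X K : Type*} [MetricSpace X] [CompactSpace X]
    [MetricSpace K] [CompactSpace K] (S : PSemiflow X K) (T : ℝ) (hT : 0 < T)
    (x : X) (k : K) :
    IsClosed (S.omegaZero T x k) ∧
    ∀ y ∈ S.omegaZero T x k, ∃ φ : ℝ → X, φ 0 = y ∧
      (∀ s t : ℝ, 0 ≤ t → S.f t (φ s) k = φ (s + t)) ∧
      range φ ⊆ S.omegaZero T x k :=
  omegaZero_closed_invariant_general S T hT x k
end
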